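/- arXiv:2206.11236 — 9 statements merged into one kernel-verified Lean document; each statement's English description precedes it below -/
import Mathlib

section
/- For n ≥ 2, the sum over all derangements σ of [n] of (-1)^{cyc(σ)} x^{exc(σ)} equals -(x + x² + ⋯ + x^{n-1}). -/
open Finset

/-- Number of cycles of a permutation (counting fixed points as 1-cycles). -/
def cyc {n : ℕ} (σ : Equiv.Perm (Fin n)) : ℕ :=
  σ.cycleType.card + (Finset.univ.filter fun i => σ i = i).card

/-- Set of excedance indices of a permutation. -/
def excIdx {n : ℕ} (σ : Equiv.Perm (Fin n)) : Finset (Fin n) :=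
  Finset.univ.filter fun i => i < σ i

/-! The sum equals `(-1)^n` times the determinant of the matrix with zero diagonal, `x` below
and `1` above it: the Leibniz term of `σ` vanishes unless `σ` is a derangement, in which case it
is `sign σ * x ^ exc σ`, and `(-1)^cyc σ = (-1)^n * sign σ`. Subtracting from each row the row
above leaves a first row `(0, 1, …, 1)` above two diagonals, and expanding along the first column
gives a recursion whose solution is `(-1)^(n-1) * (x + ⋯ + x^(n-1))`. -/

open Matrix

lemma neg_one_pow_cyc {n : ℕ} (σ : Equiv.Perm (Fin n)) :
    (-1 : ℤ) ^ cyc σ = (-1) ^ n * (Equiv.Perm.sign σ : ℤ) := by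
  set fix := #(univ.filter fun i => σ i = i)
  have hn : #σ.support + fix = n := by
    rw [add_comm, Equiv.Perm.support]
    simpa using card_filter_add_card_filter_not (s := univ) fun i => σ i = i
  rw [Equiv.Perm.sign_of_cycleType, Equiv.Perm.sum_cycleType, cyc,
    show (-1 : ℤ) ^ n = (-1) ^ (#σ.support + fix) by rw [hn]]
  push_cast
  rw [← pow_add, show #σ.support + fix + (#σ.support + σ.cycleType.card)
      = σ.cycleType.card + fix + 2 * #σ.support by ring,
    pow_add _ _ (2 * _), pow_mul, neg_one_sq, one_pow, mul_one]

lemma mul_one_add_sum_Icc {R : Type*} [CommRing R] (x : R) (n : ℕ) :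
    x * (1 + ∑ k ∈ Icc 1 n, x ^ k) = ∑ k ∈ Icc 1 (n + 1), x ^ k := by
  induction n with
  | zero => simp
  | succ n ih =>
    rw [sum_Icc_succ_top (b := n + 1) (by omega)]
    rw [sum_Icc_succ_top (b := n) (by omega)] at *
    linear_combination ih

section

variable {R : Type*} [CommRing R]

/-- The `(σ i, i)` entry is `x` exactly when `i` is an excedance of `σ`. -/
def excedanceMatrix (n : ℕ) (x : R) : Matrix (Fin n) (Fin n) R :=
  Matrix.of fun i j => if j < i then x else if i < j then 1 else 0

theorem det_excedanceMatrix (n : ℕ) (x : R) :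
    (excedanceMatrix n x).det =
      ∑ σ ∈ univ.filter (fun σ : Equiv.Perm (Fin n) => ∀ i, σ i ≠ i),
        (Equiv.Perm.sign σ : ℤ) * x ^ (excIdx σ).card := by
  rw [det_apply', sum_filter]
  refine sum_congr rfl fun σ _ => ?_
  split_ifs with hσ
  · rw [excIdx, ← prod_const, prod_filter]
    refine congrArg _ (prod_congr rfl fun i _ => ?_)
    rcases (hσ i).lt_or_gt with h | h <;> simp [excedanceMatrix, h, h.not_gt]
  · push Not at hσ
    obtain ⟨i, hi⟩ := hσ
    exact mul_eq_zero_of_right _ (prod_eq_zero (mem_univ i) (by simp [excedanceMatrix, hi]))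

/-- `excedanceMatrix n x` with each row but the first replaced by its difference with the row
above, and with top-left entry `a` (which is `0` there); its minors are again of this shape. -/
def reducedExcedanceMatrix (n : ℕ) (a x : R) : Matrix (Fin n) (Fin n) R :=
  Matrix.of fun i j =>
    if (i : ℕ) = 0 then (if (j : ℕ) = 0 then a else 1)
    else if (j : ℕ) + 1 = i then x else if (j : ℕ) = i then -1 else 0

theorem det_excedanceMatrix_eq_det_reduced (n : ℕ) (x : R) :
    (excedanceMatrix (n + 1) x).det = (reducedExcedanceMatrix (n + 1) 0 x).det := by
  refine det_eq_of_forall_row_eq_smul_add_pred (fun _ => 1) (fun j => ?_) (fun i j => ?_)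
  · rcases Fin.eq_zero_or_eq_succ j with rfl | ⟨j, rfl⟩ <;>
      simp [excedanceMatrix, reducedExcedanceMatrix]
  · simp only [excedanceMatrix, reducedExcedanceMatrix, of_apply, Fin.lt_def, Fin.val_succ,
      Fin.val_castSucc, Nat.succ_ne_zero, if_false, one_mul]
    split_ifs <;> first | omega | ring1

theorem det_succ_succ_of_column_zero {n : ℕ} (M : Matrix (Fin (n + 2)) (Fin (n + 2)) R)
    (hM : ∀ i : Fin n, M i.succ.succ 0 = 0) :
    M.det = M 0 0 * (M.submatrix Fin.succ Fin.succ).det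
      - M 1 0 * (M.submatrix (Fin.succAbove 1) Fin.succ).det := by
  rw [det_succ_column_zero, Fin.sum_univ_succ, Fin.sum_univ_succ]
  simp [hM, sub_eq_add_neg]

theorem det_reducedExcedanceMatrix_submatrix_succ (n : ℕ) (a x : R) :
    ((reducedExcedanceMatrix (n + 1) a x).submatrix Fin.succ Fin.succ).det = (-1) ^ n := by
  rw [det_of_isLowerTriangular]
  · simp [reducedExcedanceMatrix]
  · intro i j (h : (i : ℕ) < j)
    simp [reducedExcedanceMatrix, h.ne', show (j : ℕ) + 1 ≠ i by omega]

theorem reducedExcedanceMatrix_submatrix_succAbove_one (n : ℕ) (a x : R) :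
    (reducedExcedanceMatrix (n + 2) a x).submatrix (Fin.succAbove 1) Fin.succ =
      reducedExcedanceMatrix (n + 1) 1 x := by
  ext i j
  rcases Fin.eq_zero_or_eq_succ i with rfl | ⟨i, rfl⟩
  · simp [reducedExcedanceMatrix]
  · simp [reducedExcedanceMatrix, Fin.succAbove_of_le_castSucc, Fin.le_def]

theorem det_reducedExcedanceMatrix (n : ℕ) (a x : R) :
    (reducedExcedanceMatrix (n + 1) a x).det = (-1) ^ n * (a + ∑ k ∈ Icc 1 n, x ^ k) := by
  induction n generalizing a with
  | zero => simp [reducedExcedanceMatrix]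
  | succ n ih =>
    have h00 : reducedExcedanceMatrix (n + 2) a x 0 0 = a := by simp [reducedExcedanceMatrix]
    have h10 : reducedExcedanceMatrix (n + 2) a x 1 0 = x := by simp [reducedExcedanceMatrix]
    rw [det_succ_succ_of_column_zero _ fun i => by simp [reducedExcedanceMatrix],
      det_reducedExcedanceMatrix_submatrix_succ, reducedExcedanceMatrix_submatrix_succAbove_one,
      ih, ← mul_one_add_sum_Icc, h00, h10]
    ring

end

theorem stmt0 {R : Type*} [CommRing R] (x : R) (n : ℕ) (hn : 2 ≤ n) :
    ∑ σ ∈ Finset.univ.filter (fun σ : Equiv.Perm (Fin n) => ∀ i, σ i ≠ i),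
      (-1 : R) ^ cyc σ * x ^ (excIdx σ).card
    = -(∑ k ∈ Finset.Icc 1 (n - 1), x ^ k) := by
  obtain ⟨m, rfl⟩ : ∃ m, n = m + 1 := ⟨n - 1, by omega⟩
  calc _ = (-1) ^ (m + 1) * (excedanceMatrix (m + 1) x).det := by
        rw [det_excedanceMatrix, mul_sum]
        refine sum_congr rfl fun σ _ => ?_
        have h := congrArg (Int.cast : ℤ → R) (neg_one_pow_cyc σ)
        push_cast at h
        rw [h]
        ring
    _ = (-1) ^ (m + 1) * ((-1) ^ m * ∑ k ∈ Icc 1 m, x ^ k) := by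
        rw [det_excedanceMatrix_eq_det_reduced, det_reducedExcedanceMatrix, zero_add]
    _ = -(∑ k ∈ Icc 1 m, x ^ k) := by
        rw [← mul_assoc, ← pow_add, Odd.neg_one_pow ⟨m, by ring⟩, neg_one_mul]
end

section
/- For n ≥ 2, the sum over all derangements σ of [n] of (-1)^{inv(σ)} x^{exc(σ)} equals (-1)^{n-1}(x + x² + ⋯ + x^{n-1}). -/
/-!
The signed generating function is the determinant of the `n × n` matrix `M` with `0` on the
diagonal, `x` below it and `1` above it: in the Leibniz expansion `∏ i, M (σ i) i` vanishes
unless `σ` is a derangement, and is then `x ^ exc σ`. Writing `M = L + 𝟙 𝟙ᵀ` with `L` lower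
triangular with diagonal `-1`, one has `L u = 𝟙` for `u i = -x ^ i`, so `M = L (1 + u 𝟙ᵀ)` and
`det M = (-1) ^ n (1 + 𝟙ᵀ u) = (-1) ^ n (1 - (1 + x + ⋯ + x ^ (n - 1)))`.
-/

open Finset

/-- Number of inversions of a permutation: pairs i < j with σ i > σ j. -/
def inv {n : ℕ} (σ : Equiv.Perm (Fin n)) : ℕ :=
  (Finset.univ.filter fun p : Fin n × Fin n => p.1 < p.2 ∧ σ p.2 < σ p.1).card

theorem sign_eq_neg_one_pow_inv {n : ℕ} (σ : Equiv.Perm (Fin n)) :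
    Equiv.Perm.sign σ = (-1) ^ inv σ := by
  let pairs := univ.filter fun p : Fin n × Fin n => p.1 < p.2
  have hpairs : ∏ p ∈ pairs, (if σ p.1 < σ p.2 then 1 else -1) = σ.sign := by
    rw [σ.sign_eq_prod_prod_Iio]
    exact prod_finset_product_right' (f := fun i j => if σ i < σ j then 1 else -1) _ _ _
      fun p => by simp [pairs]
  rw [← hpairs, prod_ite, prod_const_one, one_mul, prod_const, inv, ← filter_filter]
  congr 2
  refine filter_congr fun p hp => ?_
  exact not_lt.trans (σ.injective.ne (mem_filter.1 hp).2.ne').le_iff_lt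

theorem Fin.sum_Iio_eq_sum_range {M : Type*} [AddCommMonoid M] {n : ℕ} (f : ℕ → M)
    (i : Fin n) : ∑ j ∈ Iio i, f j = ∑ k ∈ range i, f k := by
  rw [← Nat.Iio_eq_range, ← Fin.map_valEmbedding_Iio, sum_map]
  rfl

section ExcMatrix

variable {R : Type*} [CommRing R] (x : R) (n : ℕ)

def excMatrix : Matrix (Fin n) (Fin n) R :=
  Matrix.of fun i j => if i = j then 0 else if j < i then x else 1

theorem det_excMatrix_eq_sum_derangements :
    (excMatrix x n).det = ∑ σ ∈ univ.filter (fun σ : Equiv.Perm (Fin n) => ∀ i, σ i ≠ i),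
      (-1 : R) ^ inv σ * x ^ (excIdx σ).card := by
  rw [Matrix.det_apply', sum_filter]
  refine sum_congr rfl fun σ _ => ?_
  split_ifs with hσ
  · have hentry (i : Fin n) : excMatrix x n (σ i) i = if i < σ i then x else 1 := by
      simp only [excMatrix, Matrix.of_apply, if_neg (hσ i)]
    rw [prod_congr rfl fun i _ => hentry i, prod_ite, prod_const, prod_const_one, mul_one,
      sign_eq_neg_one_pow_inv, excIdx]
    push_cast
    rfl
  · push Not at hσ
    obtain ⟨i, hi⟩ := hσ
    rw [prod_eq_zero (mem_univ i) (by simp [excMatrix, hi]), mul_zero]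

open Matrix

def excMatrixLower : Matrix (Fin n) (Fin n) R :=
  of fun i j => if i = j then -1 else if j < i then x - 1 else 0

theorem excMatrix_eq_add_vecMulVec : excMatrix x n = excMatrixLower x n + vecMulVec 1 1 := by
  ext i j
  rcases lt_trichotomy i j with h | rfl | h
  · simp [excMatrix, excMatrixLower, h.ne, h.not_gt]
  · simp [excMatrix, excMatrixLower]
  · simp [excMatrix, excMatrixLower, h.ne', h]

theorem det_excMatrixLower : (excMatrixLower x n).det = (-1) ^ n := by
  rw [det_of_isLowerTriangular _ fun i j (h : i < j) => by simp [excMatrixLower, h.ne, h.not_gt]]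
  simp [excMatrixLower]

theorem excMatrixLower_mulVec : excMatrixLower x n *ᵥ (fun i => -x ^ (i : ℕ)) = 1 := by
  funext i
  have hterm (j : Fin n) : excMatrixLower x n i j * -x ^ (j : ℕ) =
      (if i = j then x ^ (j : ℕ) else 0) + if j < i then (1 - x) * x ^ (j : ℕ) else 0 := by
    rcases lt_trichotomy i j with h | rfl | h
    · simp [excMatrixLower, h.ne, h.not_gt]
    · simp [excMatrixLower]
    · simp [excMatrixLower, h.ne', h]; ring
  simp only [mulVec, dotProduct, hterm, sum_add_distrib, sum_ite_eq, mem_univ, if_true,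
    ← sum_filter, filter_gt_eq_Iio, ← mul_sum, Fin.sum_Iio_eq_sum_range (x ^ ·),
    mul_neg_geom_sum, Pi.one_apply]
  exact add_sub_cancel _ _

theorem det_excMatrix : (excMatrix x n).det = (-1) ^ n * (1 - ∑ k ∈ range n, x ^ k) := by
  have hcol : replicateCol Unit (1 : Fin n → R) =
      excMatrixLower x n * replicateCol Unit fun i : Fin n => -x ^ (i : ℕ) := by
    rw [← replicateCol_mulVec, excMatrixLower_mulVec]
  rw [excMatrix_eq_add_vecMulVec, vecMulVec_eq Unit, hcol, Matrix.mul_assoc,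
    ← _root_.mul_one_add, det_mul, det_excMatrixLower, det_one_add_replicateCol_mul_replicateRow,
    ← Fin.sum_univ_eq_sum_range]
  simp [dotProduct, sub_eq_add_neg]

end ExcMatrix

theorem stmt1 {R : Type*} [CommRing R] (x : R) (n : ℕ) (hn : 2 ≤ n) :
    ∑ σ ∈ Finset.univ.filter (fun σ : Equiv.Perm (Fin n) => ∀ i, σ i ≠ i),
      (-1 : R) ^ inv σ * x ^ (excIdx σ).card
    = (-1 : R) ^ (n - 1) * (∑ k ∈ Finset.Icc 1 (n - 1), x ^ k) := by
  obtain ⟨m, rfl⟩ : ∃ m, n = m + 1 := ⟨n - 1, by omega⟩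
  rw [← det_excMatrix_eq_sum_derangements, det_excMatrix, Nat.range_succ_eq_Icc_zero,
    Icc_eq_cons_Ioc m.zero_le, sum_cons, ← Icc_add_one_left_eq_Ioc, zero_add, Nat.add_sub_cancel]
  ring
end

section
/- For n ≥ 2 and 1 ≤ j ≤ n-1, the sum over derangements σ of [n] with σ(n) = j of (-1)^{cyc(σ)} x^{exc(σ)} equals -x^{n-j}. -/
open Finset

section Aux

open Equiv Matrix

variable {R : Type*} [CommRing R]

lemma sum_two {ι : Type*} [Fintype ι] [DecidableEq ι] (f : ι → R) (a b : ι) (hab : a ≠ b)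
    (h : ∀ c, c ≠ a → c ≠ b → f c = 0) : ∑ c, f c = f a + f b := by
  classical
  rw [← Finset.sum_subset (Finset.subset_univ {a, b})]
  · rw [Finset.sum_pair hab]
  · intro c _ hc
    simp only [Finset.mem_insert, Finset.mem_singleton, not_or] at hc
    exact h c hc.1 hc.2

lemma sum_three {ι : Type*} [Fintype ι] [DecidableEq ι] (f : ι → R) (a b d : ι)
    (hab : a ≠ b) (had : a ≠ d) (hbd : b ≠ d)
    (h : ∀ c, c ≠ a → c ≠ b → c ≠ d → f c = 0) : ∑ c, f c = f a + f b + f d := by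
  classical
  rw [← Finset.sum_subset (Finset.subset_univ {a, b, d})]
  · rw [Finset.sum_insert (by simp [hab, had]), Finset.sum_pair hbd, add_assoc]
  · intro c _ hc
    simp only [Finset.mem_insert, Finset.mem_singleton, not_or] at hc
    exact h c hc.1 hc.2.1 hc.2.2

lemma sum_one {ι : Type*} [Fintype ι] [DecidableEq ι] (f : ι → R) (a : ι)
    (h : ∀ c, c ≠ a → f c = 0) : ∑ c, f c = f a := Fintype.sum_eq_single a h

lemma ne_val {n : ℕ} (c : Fin n) (v : ℕ) (hv : v < n) (h : c ≠ ⟨v, hv⟩) : (c : ℕ) ≠ v :=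
  fun hh => h (Fin.ext hh)

lemma cyc_sign {n : ℕ} (σ : Equiv.Perm (Fin n)) :
    ((-1 : R)) ^ cyc σ = (-1) ^ n * ((Equiv.Perm.sign σ : ℤ) : R) := by
  have h1 : σ.cycleType.sum = σ.support.card := Equiv.Perm.sum_cycleType σ
  have h2 : (Equiv.Perm.sign σ : ℤ) = (-1 : ℤ) ^ (σ.cycleType.sum + Multiset.card σ.cycleType) := by
    rw [Equiv.Perm.sign_of_cycleType]; push_cast; ring
  have h3 : (Finset.univ.filter fun i => σ i = i).card = n - σ.support.card := by
    have : (Finset.univ.filter fun i => σ i = i) = σ.supportᶜ := by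
      ext i; simp [Equiv.Perm.mem_support]
    rw [this, Finset.card_compl, Fintype.card_fin]
  have hsle : σ.support.card ≤ n := by
    simpa using Finset.card_le_card (Finset.subset_univ σ.support)
  rw [h2]
  push_cast
  rw [cyc, h3]
  have : ∀ a b : ℕ, a % 2 = b % 2 → ((-1 : R)) ^ a = (-1) ^ b := by
    intro a b hab
    rw [← Nat.div_add_mod a 2, ← Nat.div_add_mod b 2, pow_add, pow_add, pow_mul, pow_mul]
    simp [hab]
  rw [this (Multiset.card σ.cycleType + (n - σ.support.card))
      (n + (σ.cycleType.sum + Multiset.card σ.cycleType)) (by omega), pow_add]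

section DetComp
variable (x : R) (m j0 : ℕ)

def ageo (t : ℕ) : R := ∑ s ∈ Finset.range (t+1), x^s
def cgeo : R := ∑ s ∈ Finset.range m, x^s

lemma ageo_succ (t : ℕ) (ht : 1 ≤ t) : ageo x t = x * ageo x (t-1) + 1 := by
  rw [ageo, ageo, show t + 1 = (t - 1 + 1) + 1 by omega, geom_sum_succ]

lemma ageo_zero : ageo x 0 = 1 := by simp [ageo]

lemma cgeo_eq (hm : 1 ≤ m) : cgeo x m = ageo x (m-1) := by
  rw [cgeo, ageo, show m - 1 + 1 = m by omega]

def B1 : Matrix (Fin (m+2)) (Fin (m+2)) R := Matrix.of fun i k =>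
  if (i : ℕ) < m then (if (k : ℕ) = (i : ℕ) then -1 else if (k : ℕ) = (i : ℕ) + 1 then x else 0)
  else if (i : ℕ) = m then (if (k : ℕ) < m then 1 else if (k : ℕ) = m then 0 else x)
  else (if (k : ℕ) = j0 then 1 else 0)

def Amat : Matrix (Fin (m+2)) (Fin (m+2)) R := Matrix.of fun i k =>
  if (i : ℕ) = m+1 then (if (k : ℕ) = j0 then 1 else 0)
  else if (i : ℕ) < (k : ℕ) then x else if (i : ℕ) = (k : ℕ) then 0 else 1

def U1 : Matrix (Fin (m+2)) (Fin (m+2)) R := Matrix.of fun i k =>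
  if i = k then 1 else if (i : ℕ) < m ∧ (k : ℕ) = (i : ℕ) + 1 then -1 else 0

lemma Amat_pattern (i k : Fin (m+2)) (hi : (i : ℕ) ≠ m+1) :
    Amat x m j0 i k = if (i : ℕ) < (k : ℕ) then x else if (i : ℕ) = (k : ℕ) then 0 else 1 := by
  simp [Amat, hi]

lemma Amat_mk (iv : ℕ) (hv : iv < m+2) (hne : iv ≠ m+1) (k : Fin (m+2)) :
    Amat x m j0 ⟨iv, hv⟩ k = if iv < (k : ℕ) then x else if iv = (k : ℕ) then 0 else 1 := by
  have : ¬ (iv = m+1) := hne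
  simp only [Amat, Matrix.of_apply, Fin.val_mk, if_neg this, Fin.lt_def]

lemma hB1 : (U1 (R := R) m) * (Amat x m j0) = B1 x m j0 := by
  ext i k
  rw [Matrix.mul_apply]
  by_cases hi : (i : ℕ) < m
  · have hb : i ≠ (⟨(i : ℕ)+1, by omega⟩ : Fin (m+2)) := by simp [Fin.ext_iff]
    rw [sum_two _ i ⟨(i : ℕ)+1, by omega⟩ hb
      (fun c hc1 hc2 => by
        have h1 : ¬ (i = c) := fun h => hc1 h.symm
        have h2 : ¬ ((c : ℕ) = (i : ℕ) + 1) := fun h => hc2 (Fin.ext h)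
        simp [U1, h1, h2])]
    have e1 : U1 (R := R) m i i = 1 := by simp [U1]
    have e2 : U1 (R := R) m i ⟨(i : ℕ)+1, by omega⟩ = -1 := by
      simp [U1, hb, hi]
    rw [e1, e2, Amat_pattern x m j0 i k (by omega),
      Amat_mk x m j0 ((i : ℕ)+1) (by omega) (by omega) k]
    simp only [B1, Matrix.of_apply, if_pos hi]
    split_ifs <;> first | ring1 | omega | (exfalso; omega)
  · rw [sum_one _ i (fun c hc => by
      have h1 : ¬ (i = c) := fun h => hc h.symm
      simp [U1, h1, hi])]
    have e1 : U1 (R := R) m i i = 1 := by simp [U1]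
    rw [e1, one_mul]
    rcases (by omega : (i : ℕ) = m ∨ (i : ℕ) = m + 1) with h | h
    · rw [Amat_pattern x m j0 i k (by omega)]
      simp only [B1, Matrix.of_apply, h, if_neg (by omega : ¬ m < m), if_pos rfl]
      split_ifs <;> first | ring1 | omega | (exfalso; omega)
    · simp [Amat, B1, h]

def U2 : Matrix (Fin (m+2)) (Fin (m+2)) R := Matrix.of fun i k =>
  if (i : ℕ) = (k : ℕ) then 1
  else if (i : ℕ) = m ∧ (k : ℕ) < m then ageo x (k : ℕ)
  else if (i : ℕ) = m+1 ∧ j0 ≤ (k : ℕ) ∧ (k : ℕ) < m then x^((k : ℕ) - j0) else 0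

def B2 : Matrix (Fin (m+2)) (Fin (m+2)) R := Matrix.of fun i k =>
  if (i : ℕ) < m then (if (k : ℕ) = (i : ℕ) then -1 else if (k : ℕ) = (i : ℕ) + 1 then x else 0)
  else if (i : ℕ) = m then (if (k : ℕ) = m then x * cgeo x m else if (k : ℕ) = m+1 then x else 0)
  else (if (k : ℕ) = m then x^(m-j0) else 0)

lemma B1_col_zero (c k : Fin (m+2)) (h1 : (c : ℕ) < m) (h2 : (k : ℕ) ≠ (c : ℕ))
    (h3 : (k : ℕ) ≠ (c : ℕ)+1) : B1 x m j0 c k = 0 := by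
  simp [B1, h1, h2, h3]

lemma B1_rowm_zero (c k : Fin (m+2)) (h1 : (c : ℕ) = m) (h2 : (k : ℕ) = m) :
    B1 x m j0 c k = 0 := by
  simp [B1, h1, h2]

lemma B1_last_zero (c k : Fin (m+2)) (h1 : (c : ℕ) = m+1) (h2 : (k : ℕ) ≠ j0) :
    B1 x m j0 c k = 0 := by
  simp only [B1, Matrix.of_apply, if_neg (by omega : ¬ (c:ℕ) < m),
    if_neg (by omega : ¬ (c:ℕ) = m), if_neg h2]

lemma U2_diag (c d : Fin (m+2)) (h : (c : ℕ) = (d : ℕ)) : U2 (R := R) x m j0 c d = 1 := by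
  simp [U2, h]

lemma U2_mid (c d : Fin (m+2)) (v : ℕ) (h1 : (c : ℕ) = m) (h2 : (d : ℕ) = v) (h3 : v < m) :
    U2 (R := R) x m j0 c d = ageo x v := by
  simp only [U2, Matrix.of_apply, h2]
  rw [if_neg (by omega), if_pos ⟨h1, h3⟩]

lemma U2_lastrow (c d : Fin (m+2)) (v : ℕ) (h1 : (c : ℕ) = m+1) (h2 : (d : ℕ) = v)
    (h3 : j0 ≤ v) (h4 : v < m) : U2 (R := R) x m j0 c d = x ^ (v - j0) := by
  simp only [U2, Matrix.of_apply, h2]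
  rw [if_neg (by omega), if_neg (by omega), if_pos ⟨h1, h3, h4⟩]

lemma B1_neg1 (c k : Fin (m+2)) (h1 : (c : ℕ) < m) (h2 : (k : ℕ) = (c : ℕ)) :
    B1 (R := R) x m j0 c k = -1 := by
  simp [B1, h1, h2]

lemma B1_x (c k : Fin (m+2)) (h1 : (c : ℕ) < m) (h2 : (k : ℕ) = (c : ℕ) + 1) :
    B1 (R := R) x m j0 c k = x := by
  simp only [B1, Matrix.of_apply, if_pos h1, if_neg (by omega : ¬ (k:ℕ) = (c:ℕ)), if_pos h2]

lemma B1_one (c k : Fin (m+2)) (h1 : (c : ℕ) = m) (h2 : (k : ℕ) < m) :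
    B1 (R := R) x m j0 c k = 1 := by
  simp only [B1, Matrix.of_apply, if_neg (by omega : ¬ (c:ℕ) < m), if_pos h1, if_pos h2]

lemma B1_xm (c k : Fin (m+2)) (h1 : (c : ℕ) = m) (h2 : (k : ℕ) = m+1) :
    B1 (R := R) x m j0 c k = x := by
  simp only [B1, Matrix.of_apply, if_neg (by omega : ¬ (c:ℕ) < m), if_pos h1,
    if_neg (by omega : ¬ (k:ℕ) < m), if_neg (by omega : ¬ (k:ℕ) = m)]

lemma B1_j1 (c k : Fin (m+2)) (h1 : (c : ℕ) = m+1) (h2 : (k : ℕ) = j0) :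
    B1 (R := R) x m j0 c k = 1 := by
  simp only [B1, Matrix.of_apply, if_neg (by omega : ¬ (c:ℕ) < m),
    if_neg (by omega : ¬ (c:ℕ) = m), if_pos h2]

lemma B2_m_small (i k : Fin (m+2)) (h1 : (i : ℕ) = m) (h2 : (k : ℕ) < m) :
    B2 (R := R) x m j0 i k = 0 := by
  simp only [B2, Matrix.of_apply, if_neg (by omega : ¬ (i:ℕ) < m), if_pos h1,
    if_neg (by omega : ¬ (k:ℕ) = m), if_neg (by omega : ¬ (k:ℕ) = m+1)]

lemma B2_m_m (i k : Fin (m+2)) (h1 : (i : ℕ) = m) (h2 : (k : ℕ) = m) :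
    B2 (R := R) x m j0 i k = x * cgeo x m := by
  simp only [B2, Matrix.of_apply, if_neg (by omega : ¬ (i:ℕ) < m), if_pos h1, if_pos h2]

lemma B2_m_last (i k : Fin (m+2)) (h1 : (i : ℕ) = m) (h2 : (k : ℕ) = m+1) :
    B2 (R := R) x m j0 i k = x := by
  simp only [B2, Matrix.of_apply, if_neg (by omega : ¬ (i:ℕ) < m), if_pos h1,
    if_neg (by omega : ¬ (k:ℕ) = m), if_pos h2]

lemma B2_l_m (i k : Fin (m+2)) (h1 : (i : ℕ) = m+1) (h2 : (k : ℕ) = m) :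
    B2 (R := R) x m j0 i k = x ^ (m - j0) := by
  simp only [B2, Matrix.of_apply, if_neg (by omega : ¬ (i:ℕ) < m),
    if_neg (by omega : ¬ (i:ℕ) = m), if_pos h2]

lemma B2_l_other (i k : Fin (m+2)) (h1 : (i : ℕ) = m+1) (h2 : (k : ℕ) ≠ m) :
    B2 (R := R) x m j0 i k = 0 := by
  simp only [B2, Matrix.of_apply, if_neg (by omega : ¬ (i:ℕ) < m),
    if_neg (by omega : ¬ (i:ℕ) = m), if_neg h2]

lemma hB2 (hj : j0 ≤ m) : (U2 (R := R) x m j0) * (B1 x m j0) = B2 x m j0 := by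
  ext i k
  rw [Matrix.mul_apply]
  rcases (by omega : (i : ℕ) < m ∨ (i : ℕ) = m ∨ (i : ℕ) = m+1) with hi | hi | hi
  · -- row i < m : U2 row is e_i
    rw [sum_one _ i (fun c hc => by
      have h1 : (i : ℕ) ≠ (c : ℕ) := fun hh => hc (Fin.ext hh).symm
      have : U2 (R := R) x m j0 i c = 0 := by
        simp only [U2, Matrix.of_apply, if_neg h1,
          if_neg (by omega : ¬((i:ℕ) = m ∧ (c:ℕ) < m)),
          if_neg (by omega : ¬((i:ℕ) = m+1 ∧ j0 ≤ (c:ℕ) ∧ (c:ℕ) < m))]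
      rw [this, zero_mul])]
    have : U2 (R := R) x m j0 i i = 1 := by simp [U2]
    rw [this, one_mul]
    simp only [B1, B2, Matrix.of_apply, if_pos hi]
  · -- row i = m
    have hrow : ∀ c : Fin (m+2), (c : ℕ) = m+1 → U2 (R := R) x m j0 i c = 0 := by
      intro c hc
      simp only [U2, Matrix.of_apply, if_neg (by omega : ¬((i:ℕ) = (c:ℕ))),
        if_neg (by omega : ¬((i:ℕ) = m ∧ (c:ℕ) < m)),
        if_neg (by omega : ¬((i:ℕ) = m+1 ∧ j0 ≤ (c:ℕ) ∧ (c:ℕ) < m))]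
    rcases (by omega : ((k:ℕ) < m ∧ (k:ℕ) = 0) ∨ ((k:ℕ) < m ∧ 1 ≤ (k:ℕ)) ∨
        ((k:ℕ) = m ∧ m = 0) ∨ ((k:ℕ) = m ∧ 1 ≤ m) ∨ (k:ℕ) = m+1)
      with ⟨hk, hk0⟩ | ⟨hk, hk1⟩ | ⟨hk, hm0⟩ | ⟨hk, hm1⟩ | hk
    · -- k = 0 < m : support {⟨0⟩, ⟨m⟩}
      rw [sum_two _ ⟨(k:ℕ), by omega⟩ ⟨m, by omega⟩ (by simp [Fin.ext_iff]; omega)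
        (fun c hc1 hc2 => by
          rcases (by omega : (c : ℕ) < m ∨ (c:ℕ) = m ∨ (c : ℕ) = m + 1) with h | h | h
          · rw [B1_col_zero x m j0 c k h
              (Ne.symm (ne_val c (k:ℕ) (by omega) hc1)) (by omega), mul_zero]
          · exact absurd (Fin.ext h) hc2
          · rw [hrow c h, zero_mul])]
      rw [U2_mid x m j0 i ⟨(k:ℕ), by omega⟩ (k:ℕ) hi rfl hk,
        B1_neg1 x m j0 ⟨(k:ℕ), by omega⟩ k hk rfl,
        U2_diag x m j0 i ⟨m, by omega⟩ hi,
        B1_one x m j0 ⟨m, by omega⟩ k rfl hk,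
        B2_m_small x m j0 i k hi hk, hk0, ageo_zero]
      ring
    · -- 1 ≤ k < m : support {⟨k⟩, ⟨k-1⟩, ⟨m⟩}
      rw [sum_three _ ⟨(k:ℕ), by omega⟩ ⟨(k:ℕ)-1, by omega⟩ ⟨m, by omega⟩
        (by simp [Fin.ext_iff]; omega) (by simp [Fin.ext_iff]; omega)
        (by simp [Fin.ext_iff]; omega)
        (fun c hc1 hc2 hc3 => by
          rcases (by omega : (c : ℕ) < m ∨ (c:ℕ) = m ∨ (c : ℕ) = m + 1) with h | h | h
          · rw [B1_col_zero x m j0 c k h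
              (Ne.symm (ne_val c (k:ℕ) (by omega) hc1))
              (fun hh => (ne_val c ((k:ℕ)-1) (by omega) hc2) (by omega)), mul_zero]
          · exact absurd (Fin.ext h) hc3
          · rw [hrow c h, zero_mul])]
      rw [U2_mid x m j0 i ⟨(k:ℕ), by omega⟩ (k:ℕ) hi rfl hk,
        B1_neg1 x m j0 ⟨(k:ℕ), by omega⟩ k hk rfl,
        U2_mid x m j0 i ⟨(k:ℕ)-1, by omega⟩ ((k:ℕ)-1) hi rfl (by omega),
        B1_x x m j0 ⟨(k:ℕ)-1, by omega⟩ k (show (k:ℕ)-1 < m by omega)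
          (show (k:ℕ) = (k:ℕ)-1+1 by omega),
        U2_diag x m j0 i ⟨m, by omega⟩ hi,
        B1_one x m j0 ⟨m, by omega⟩ k rfl hk,
        B2_m_small x m j0 i k hi hk, ageo_succ x (k:ℕ) hk1]
      ring
    · -- k = m, m = 0
      rw [Finset.sum_eq_zero (fun c _ => by
        rcases (by omega : (c:ℕ) = m ∨ (c : ℕ) = m + 1) with h | h
        · rw [B1_rowm_zero x m j0 c k h hk, mul_zero]
        · rw [hrow c h, zero_mul])]
      simp only [B2, Matrix.of_apply, Fin.val_mk]
      rw [if_neg (by omega), if_pos hi, if_pos hk]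
      simp [cgeo, hm0]
    · -- k = m, 1 ≤ m : support {⟨m-1⟩}
      rw [sum_one _ ⟨m-1, by omega⟩ (fun c hc => by
        rcases (by omega : (c : ℕ) < m ∨ (c:ℕ) = m ∨ (c : ℕ) = m + 1) with h | h | h
        · rw [B1_col_zero x m j0 c k h (by omega)
            (fun hh => (ne_val c (m-1) (by omega) hc) (by omega)), mul_zero]
        · rw [B1_rowm_zero x m j0 c k h hk, mul_zero]
        · rw [hrow c h, zero_mul])]
      rw [U2_mid x m j0 i ⟨m-1, by omega⟩ (m-1) hi rfl (by omega),
        B1_x x m j0 ⟨m-1, by omega⟩ k (show m-1 < m by omega) (show (k:ℕ) = m-1+1 by omega),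
        B2_m_m x m j0 i k hi hk, cgeo_eq x m hm1]
      ring
    · -- k = m+1 : support {⟨m⟩}
      rw [sum_one _ ⟨m, by omega⟩ (fun c hc => by
        rcases (by omega : (c : ℕ) < m ∨ (c:ℕ) = m ∨ (c : ℕ) = m + 1) with h | h | h
        · rw [B1_col_zero x m j0 c k h (by omega) (by omega), mul_zero]
        · exact absurd (Fin.ext h) hc
        · rw [hrow c h, zero_mul])]
      rw [U2_diag x m j0 i ⟨m, by omega⟩ hi,
        B1_xm x m j0 ⟨m, by omega⟩ k rfl hk,
        B2_m_last x m j0 i k hi hk]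
      ring
  · -- row i = m+1
    have hz1 : ∀ c : Fin (m+2), ((c:ℕ) < j0 ∨ (c:ℕ) = m) → U2 (R := R) x m j0 i c = 0 := by
      intro c hc
      simp only [U2, Matrix.of_apply, if_neg (by omega : ¬((i:ℕ) = (c:ℕ))),
        if_neg (by omega : ¬((i:ℕ) = m ∧ (c:ℕ) < m)),
        if_neg (by omega : ¬((i:ℕ) = m+1 ∧ j0 ≤ (c:ℕ) ∧ (c:ℕ) < m))]
    rcases (by omega : ((k:ℕ) < j0) ∨ ((k:ℕ) = j0 ∧ j0 < m) ∨ ((k:ℕ) = j0 ∧ j0 = m) ∨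
        (j0 < (k:ℕ) ∧ (k:ℕ) < m) ∨ ((k:ℕ) = m ∧ j0 < m) ∨ (k:ℕ) = m+1)
      with hk | ⟨hk, hjm⟩ | ⟨hk, hjm⟩ | ⟨hk1, hk2⟩ | ⟨hk, hjm⟩ | hk
    · -- k < j0 : all zero
      rw [Finset.sum_eq_zero (fun c _ => by
        rcases (by omega : (c : ℕ) < j0 ∨ (j0 ≤ (c:ℕ) ∧ (c:ℕ) < m) ∨ (c:ℕ) = m ∨
            (c : ℕ) = m + 1) with h | ⟨h1, h2⟩ | h | h
        · rw [hz1 c (Or.inl h), zero_mul]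
        · rw [B1_col_zero x m j0 c k h2 (by omega) (by omega), mul_zero]
        · rw [hz1 c (Or.inr h), zero_mul]
        · rw [B1_last_zero x m j0 c k h (by omega), mul_zero])]
      simp only [B2, Matrix.of_apply]
      rw [if_neg (by omega), if_neg (by omega), if_neg (by omega)]
    · -- k = j0 < m : support {⟨j0⟩, ⟨m+1⟩}
      rw [sum_two _ ⟨j0, by omega⟩ ⟨m+1, by omega⟩ (by simp [Fin.ext_iff]; omega)
        (fun c hc1 hc2 => by
          rcases (by omega : (c : ℕ) < j0 ∨ (j0 ≤ (c:ℕ) ∧ (c:ℕ) < m) ∨ (c:ℕ) = m ∨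
              (c : ℕ) = m + 1) with h | ⟨h1, h2⟩ | h | h
          · rw [hz1 c (Or.inl h), zero_mul]
          · rw [B1_col_zero x m j0 c k h2
              (fun hh => (ne_val c j0 (by omega) hc1) (by omega)) (by omega), mul_zero]
          · rw [hz1 c (Or.inr h), zero_mul]
          · exact absurd (Fin.ext h) hc2)]
      rw [U2_lastrow x m j0 i ⟨j0, by omega⟩ j0 hi rfl le_rfl hjm,
        B1_neg1 x m j0 ⟨j0, by omega⟩ k hjm hk,
        U2_diag x m j0 i ⟨m+1, by omega⟩ hi,
        B1_j1 x m j0 ⟨m+1, by omega⟩ k rfl hk,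
        B2_l_other x m j0 i k hi (by omega), Nat.sub_self, pow_zero]
      ring
    · -- k = j0 = m : support {⟨m+1⟩}
      rw [sum_one _ ⟨m+1, by omega⟩ (fun c hc => by
        rcases (by omega : (c : ℕ) < j0 ∨ (c:ℕ) = m ∨ (c : ℕ) = m + 1) with h | h | h
        · rw [hz1 c (Or.inl h), zero_mul]
        · rw [hz1 c (Or.inr h), zero_mul]
        · exact absurd (Fin.ext h) hc)]
      rw [U2_diag x m j0 i ⟨m+1, by omega⟩ hi,
        B1_j1 x m j0 ⟨m+1, by omega⟩ k rfl hk,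
        B2_l_m x m j0 i k hi (by omega), show m - j0 = 0 by omega, pow_zero]
      ring
    · -- j0 < k < m : support {⟨k⟩, ⟨k-1⟩}
      rw [sum_two _ ⟨(k:ℕ), by omega⟩ ⟨(k:ℕ)-1, by omega⟩ (by simp [Fin.ext_iff]; omega)
        (fun c hc1 hc2 => by
          rcases (by omega : (c : ℕ) < j0 ∨ (j0 ≤ (c:ℕ) ∧ (c:ℕ) < m) ∨ (c:ℕ) = m ∨
              (c : ℕ) = m + 1) with h | ⟨h1, h2⟩ | h | h
          · rw [hz1 c (Or.inl h), zero_mul]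
          · rw [B1_col_zero x m j0 c k h2
              (Ne.symm (ne_val c (k:ℕ) (by omega) hc1))
              (fun hh => (ne_val c ((k:ℕ)-1) (by omega) hc2) (by omega)), mul_zero]
          · rw [hz1 c (Or.inr h), zero_mul]
          · rw [B1_last_zero x m j0 c k h (by omega), mul_zero])]
      rw [U2_lastrow x m j0 i ⟨(k:ℕ), by omega⟩ (k:ℕ) hi rfl (by omega) hk2,
        B1_neg1 x m j0 ⟨(k:ℕ), by omega⟩ k hk2 rfl,
        U2_lastrow x m j0 i ⟨(k:ℕ)-1, by omega⟩ ((k:ℕ)-1) hi rfl (by omega) (by omega),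
        B1_x x m j0 ⟨(k:ℕ)-1, by omega⟩ k (show (k:ℕ)-1 < m by omega)
          (show (k:ℕ) = (k:ℕ)-1+1 by omega),
        B2_l_other x m j0 i k hi (by omega),
        show (k:ℕ) - j0 = ((k:ℕ) - 1 - j0) + 1 by omega, pow_succ]
      ring
    · -- k = m, j0 < m : support {⟨m-1⟩}
      rw [sum_one _ ⟨m-1, by omega⟩ (fun c hc => by
        rcases (by omega : (c : ℕ) < j0 ∨ (j0 ≤ (c:ℕ) ∧ (c:ℕ) < m) ∨ (c:ℕ) = m ∨
            (c : ℕ) = m + 1) with h | ⟨h1, h2⟩ | h | h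
        · rw [hz1 c (Or.inl h), zero_mul]
        · rw [B1_col_zero x m j0 c k h2 (by omega)
            (fun hh => (ne_val c (m-1) (by omega) hc) (by omega)), mul_zero]
        · rw [hz1 c (Or.inr h), zero_mul]
        · rw [B1_last_zero x m j0 c k h (by omega), mul_zero])]
      rw [U2_lastrow x m j0 i ⟨m-1, by omega⟩ (m-1) hi rfl (by omega) (by omega),
        B1_x x m j0 ⟨m-1, by omega⟩ k (show m-1 < m by omega) (show (k:ℕ) = m-1+1 by omega),
        B2_l_m x m j0 i k hi hk,
        show m - j0 = (m - 1 - j0) + 1 by omega, pow_succ]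
    · -- k = m+1 : all zero
      rw [Finset.sum_eq_zero (fun c _ => by
        rcases (by omega : (c : ℕ) < j0 ∨ (j0 ≤ (c:ℕ) ∧ (c:ℕ) < m) ∨ (c:ℕ) = m ∨
            (c : ℕ) = m + 1) with h | ⟨h1, h2⟩ | h | h
        · rw [hz1 c (Or.inl h), zero_mul]
        · rw [B1_col_zero x m j0 c k h2 (by omega) (by omega), mul_zero]
        · rw [hz1 c (Or.inr h), zero_mul]
        · rw [B1_last_zero x m j0 c k h (by omega), mul_zero])]
      simp only [B2, Matrix.of_apply]
      rw [if_neg (by omega), if_neg (by omega), if_neg (by omega)]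

def V : Matrix (Fin (m+2)) (Fin (m+2)) R := Matrix.of fun b k =>
  if (b : ℕ) = (k : ℕ) then 1
  else if (b : ℕ) = m+1 ∧ (k : ℕ) = m then -(cgeo x m) else 0

def B3 : Matrix (Fin (m+2)) (Fin (m+2)) R := Matrix.of fun i k =>
  if (i : ℕ) < m then (if (k : ℕ) = (i : ℕ) then -1 else if (k : ℕ) = (i : ℕ) + 1 then x else 0)
  else if (i : ℕ) = m then (if (k : ℕ) = m+1 then x else 0)
  else (if (k : ℕ) = m then x^(m-j0) else 0)

def B4 : Matrix (Fin (m+2)) (Fin (m+2)) R := Matrix.of fun i k =>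
  if (i : ℕ) < m then (if (k : ℕ) = (i : ℕ) then -1 else if (k : ℕ) = (i : ℕ) + 1 then x else 0)
  else if (i : ℕ) = m then (if (k : ℕ) = m then x^(m-j0) else 0)
  else (if (k : ℕ) = m+1 then x else 0)

lemma hB3 : (B2 (R := R) x m j0) * (V x m) = B3 x m j0 := by
  ext i k
  rw [Matrix.mul_apply]
  by_cases hk : (k : ℕ) = m
  · rw [sum_two _ ⟨m, by omega⟩ ⟨m+1, by omega⟩ (by simp [Fin.ext_iff])
      (fun c hc1 hc2 => by
        have h1 : (c : ℕ) ≠ m := ne_val c m (by omega) hc1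
        have h2 : (c : ℕ) ≠ m+1 := ne_val c (m+1) (by omega) hc2
        have : V (R := R) x m c k = 0 := by
          simp only [V, Matrix.of_apply, if_neg (by omega : ¬ (c:ℕ) = (k:ℕ)),
            if_neg (by omega : ¬ ((c:ℕ) = m+1 ∧ (k:ℕ) = m))]
        rw [this, mul_zero])]
    have e1 : V (R := R) x m ⟨m, by omega⟩ k = 1 := by
      simp [V, hk]
    have e2 : V (R := R) x m ⟨m+1, by omega⟩ k = -(cgeo x m) := by
      simp [V, hk]
    rw [e1, e2]
    rcases (by omega : (i : ℕ) < m ∨ (i : ℕ) = m ∨ (i : ℕ) = m+1) with hi | hi | hi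
    · have f1 : B2 (R := R) x m j0 i ⟨m+1, by omega⟩ = 0 := by
        simp only [B2, Matrix.of_apply, if_pos hi]
        rw [if_neg (by omega), if_neg (by omega)]
      rw [f1]
      simp only [B2, B3, Matrix.of_apply, if_pos hi, hk]
      split_ifs <;> first | ring1 | omega | (exfalso; omega)
    · rw [B2_m_m x m j0 i ⟨m, by omega⟩ hi rfl, B2_m_last x m j0 i ⟨m+1, by omega⟩ hi rfl]
      have : B3 (R := R) x m j0 i k = 0 := by
        simp only [B3, Matrix.of_apply]
        rw [if_neg (by omega), if_pos hi, if_neg (by omega)]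
      rw [this]; ring
    · rw [B2_l_m x m j0 i ⟨m, by omega⟩ hi rfl, B2_l_other x m j0 i ⟨m+1, by omega⟩ hi (show m+1 ≠ m by omega)]
      have : B3 (R := R) x m j0 i k = x^(m-j0) := by
        simp only [B3, Matrix.of_apply]
        rw [if_neg (by omega), if_neg (by omega), if_pos hk]
      rw [this]; ring
  · rw [sum_one _ k (fun c hc => by
      have h1 : (c : ℕ) ≠ (k : ℕ) := fun hh => hc (Fin.ext hh)
      have : V (R := R) x m c k = 0 := by
        simp only [V, Matrix.of_apply, if_neg h1,
          if_neg (by omega : ¬ ((c:ℕ) = m+1 ∧ (k:ℕ) = m))]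
      rw [this, mul_zero])]
    have : V (R := R) x m k k = 1 := by simp [V]
    rw [this, mul_one]
    simp only [B2, B3, Matrix.of_apply]
    split_ifs <;> first | ring1 | omega | (exfalso; omega)

lemma hB4 : (B3 (R := R) x m j0).submatrix
    (Equiv.swap (⟨m, by omega⟩ : Fin (m+2)) ⟨m+1, by omega⟩) id = B4 x m j0 := by
  ext i k
  simp only [Matrix.submatrix_apply, id_eq]
  rcases (by omega : (i : ℕ) < m ∨ (i : ℕ) = m ∨ (i : ℕ) = m+1) with hi | hi | hi
  · rw [Equiv.swap_apply_of_ne_of_ne (by simp [Fin.ext_iff]; omega) (by simp [Fin.ext_iff]; omega)]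
    simp only [B3, B4, Matrix.of_apply, if_pos hi]
  · have : i = (⟨m, by omega⟩ : Fin (m+2)) := Fin.ext hi
    rw [this, Equiv.swap_apply_left]
    simp only [B3, B4, Matrix.of_apply]
    split_ifs <;> first | rfl | (exfalso; omega)
  · have : i = (⟨m+1, by omega⟩ : Fin (m+2)) := Fin.ext hi
    rw [this, Equiv.swap_apply_right]
    simp only [B3, B4, Matrix.of_apply]
    split_ifs <;> first | rfl | (exfalso; omega)

lemma detU1 : (U1 (R := R) m).det = 1 := by
  have ht : (U1 (R := R) m).BlockTriangular id := by
    intro i k h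
    have h' : (k:ℕ) < (i:ℕ) := h
    simp only [U1, Matrix.of_apply]
    rw [if_neg (fun hh => by rw [hh] at h'; omega), if_neg (by omega)]
  rw [Matrix.det_of_upperTriangular ht]
  have : ∀ i : Fin (m+2), U1 (R := R) m i i = 1 := fun i => by simp [U1]
  rw [Finset.prod_congr rfl (fun i _ => this i), Finset.prod_const_one]

lemma detU2 : (U2 (R := R) x m j0).det = 1 := by
  have ht : (U2 (R := R) x m j0).BlockTriangular OrderDual.toDual := by
    intro i k h
    have h' : (i:ℕ) < (k:ℕ) := h
    simp only [U2, Matrix.of_apply]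
    rw [if_neg (by omega), if_neg (by omega), if_neg (by omega)]
  rw [Matrix.det_of_lowerTriangular _ ht]
  have : ∀ i : Fin (m+2), U2 (R := R) x m j0 i i = 1 := fun i => by simp [U2]
  rw [Finset.prod_congr rfl (fun i _ => this i), Finset.prod_const_one]

lemma detV : (V (R := R) x m).det = 1 := by
  have ht : (V (R := R) x m).BlockTriangular OrderDual.toDual := by
    intro i k h
    have h' : (i:ℕ) < (k:ℕ) := h
    simp only [V, Matrix.of_apply]
    rw [if_neg (by omega), if_neg (by omega)]
  rw [Matrix.det_of_lowerTriangular _ ht]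
  have : ∀ i : Fin (m+2), V (R := R) x m i i = 1 := fun i => by simp [V]
  rw [Finset.prod_congr rfl (fun i _ => this i), Finset.prod_const_one]

lemma detB4 (hj : j0 ≤ m) : (B4 (R := R) x m j0).det = (-1)^m * x^(m+1-j0) := by
  have ht : (B4 (R := R) x m j0).BlockTriangular id := by
    intro i k h
    have h' : (k:ℕ) < (i:ℕ) := h
    simp only [B4, Matrix.of_apply]
    split_ifs <;> first | rfl | (exfalso; omega)
  rw [Matrix.det_of_upperTriangular ht]
  have key : ∀ i : Fin (m+2), B4 (R := R) x m j0 i i =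
      (fun t : ℕ => if t < m then (-1 : R) else if t = m then x^(m-j0) else x) (i : ℕ) := by
    intro i
    simp only [B4, Matrix.of_apply]
    split_ifs <;> first | rfl | (exfalso; omega)
  rw [Finset.prod_congr rfl (fun i _ => key i),
    Fin.prod_univ_eq_prod_range (fun t => if t < m then (-1 : R) else if t = m then x^(m-j0) else x),
    Finset.prod_range_succ, Finset.prod_range_succ]
  rw [if_neg (by omega : ¬ m < m), if_pos rfl, if_neg (by omega : ¬ m+1 < m),
    if_neg (by omega : ¬ m+1 = m)]
  rw [Finset.prod_congr rfl (fun t ht => if_pos (Finset.mem_range.mp ht)),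
    Finset.prod_const, Finset.card_range]
  rw [show m + 1 - j0 = (m - j0) + 1 by omega, pow_succ]
  ring

lemma detA (hj : j0 ≤ m) : (Amat (R := R) x m j0).det = (-1)^(m+1) * x^(m+1-j0) := by
  have h3 : (B3 (R := R) x m j0).det = (B2 x m j0 * V x m).det := by rw [hB3]
  have h2 : (B2 (R := R) x m j0).det = (U2 x m j0 * B1 x m j0).det := by rw [hB2 x m j0 hj]
  have h1 : (B1 (R := R) x m j0).det = (U1 m * Amat x m j0).det := by rw [hB1]
  have hperm := Matrix.det_permute (Equiv.swap (⟨m, by omega⟩ : Fin (m+2)) ⟨m+1, by omega⟩)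
    (B3 (R := R) x m j0)
  rw [hB4 x m j0, Equiv.Perm.sign_swap (by simp [Fin.ext_iff])] at hperm
  have hB3det : (B3 (R := R) x m j0).det = - (B4 x m j0).det := by
    rw [hperm]; simp
  have : (Amat (R := R) x m j0).det = (B3 (R := R) x m j0).det := by
    rw [h3, Matrix.det_mul, detV, mul_one, h2, Matrix.det_mul, detU2, one_mul, h1,
      Matrix.det_mul, detU1, one_mul]
  rw [this, hB3det, detB4 x m j0 hj, pow_succ]
  ring


lemma prod_Amat (hj : j0 ≤ m) (σ : Equiv.Perm (Fin (m+2))) :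
    ∏ i, Amat (R := R) x m j0 i (σ i) =
      if (∀ i, σ i ≠ i) ∧ σ ⟨m+1, by omega⟩ = ⟨j0, by omega⟩
      then x ^ (Finset.univ.filter fun i => i < σ i).card else 0 := by
  by_cases h2 : σ ⟨m+1, by omega⟩ = ⟨j0, by omega⟩
  · by_cases h1 : ∀ i, σ i ≠ i
    · rw [if_pos ⟨h1, h2⟩]
      have hval : ∀ i : Fin (m+2), Amat (R := R) x m j0 i (σ i) =
          if i < σ i then x else 1 := by
        intro i
        by_cases hlast : (i : ℕ) = m+1
        · have hi : i = (⟨m+1, by omega⟩ : Fin (m+2)) := Fin.ext hlast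
          rw [hi, h2]
          simp only [Amat, Matrix.of_apply, Fin.lt_def]
          split_ifs <;> first | rfl | (exfalso; omega)
        · have hne : (σ i : ℕ) ≠ (i : ℕ) := fun hh => h1 i (Fin.ext hh)
          simp only [Amat, Matrix.of_apply, if_neg hlast, Fin.lt_def]
          split_ifs <;> first | rfl | omega
      rw [Finset.prod_congr rfl (fun i _ => hval i), Finset.prod_ite,
        Finset.prod_const, Finset.prod_const_one, mul_one]
    · rw [if_neg (fun hh => h1 hh.1)]
      push_neg at h1
      obtain ⟨i, hi⟩ := h1
      have hne : (i : ℕ) ≠ m+1 := by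
        intro hh
        have hieq : i = (⟨m+1, by omega⟩ : Fin (m+2)) := Fin.ext hh
        rw [hieq] at hi
        rw [h2] at hi
        have : j0 = m+1 := congrArg Fin.val hi
        omega
      refine Finset.prod_eq_zero (Finset.mem_univ i) ?_
      rw [hi]
      simp only [Amat, Matrix.of_apply, if_neg hne]
      split_ifs <;> first | rfl | (exfalso; omega)
  · rw [if_neg (fun hh => h2 hh.2)]
    refine Finset.prod_eq_zero (Finset.mem_univ (⟨m+1, by omega⟩ : Fin (m+2))) ?_
    simp only [Amat, Matrix.of_apply]
    rw [if_pos trivial, if_neg (fun hh => h2 (Fin.ext hh))]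

lemma core (hj : j0 ≤ m) :
    ∑ σ ∈ Finset.univ.filter (fun σ : Equiv.Perm (Fin (m+2)) =>
        (∀ i, σ i ≠ i) ∧ σ ⟨m+1, by omega⟩ = ⟨j0, by omega⟩),
      (-1 : R) ^ cyc σ * x ^ (Finset.univ.filter fun i => i < σ i).card
    = - x ^ (m+1-j0) := by
  have step1 : ∀ σ : Equiv.Perm (Fin (m+2)),
      (-1 : R) ^ cyc σ * x ^ (Finset.univ.filter fun i => i < σ i).card
      = (-1)^(m+2) * (((Equiv.Perm.sign σ : ℤ) : R) * x ^ (Finset.univ.filter fun i => i < σ i).card) := by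
    intro σ
    rw [cyc_sign (R := R) σ]
    ring
  rw [Finset.sum_congr rfl (fun σ _ => step1 σ), ← Finset.mul_sum]
  have step2 : ∑ σ ∈ Finset.univ.filter (fun σ : Equiv.Perm (Fin (m+2)) =>
        (∀ i, σ i ≠ i) ∧ σ ⟨m+1, by omega⟩ = ⟨j0, by omega⟩),
      (((Equiv.Perm.sign σ : ℤ) : R) * x ^ (Finset.univ.filter fun i => i < σ i).card)
      = (Amat (R := R) x m j0)ᵀ.det := by
    rw [Matrix.det_apply', Finset.sum_filter]
    refine Finset.sum_congr rfl (fun σ _ => ?_)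
    have : ∏ i, (Amat (R := R) x m j0)ᵀ (σ i) i = ∏ i, Amat (R := R) x m j0 i (σ i) := by
      refine Finset.prod_congr rfl (fun i _ => ?_)
      rw [Matrix.transpose_apply]
    rw [this, prod_Amat x m j0 hj σ]
    split_ifs <;> ring
  rw [step2, Matrix.det_transpose, detA x m j0 hj]
  have : ((-1 : R))^(m+2) * ((-1)^(m+1) * x^(m+1-j0)) = ((-1 : R))^(m+2+(m+1)) * x^(m+1-j0) := by
    rw [pow_add]; ring
  rw [this, Odd.neg_one_pow ⟨m+1, by ring⟩]
  ring

end DetComp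


end Aux

/-- With `Fin n` representing `[n] = {1,…,n}` (index `i : Fin n` is `i+1`),
`σ ⟨n-1⟩ = ⟨j-1⟩` encodes `σ(n) = j`. -/
theorem stmt2 {R : Type*} [CommRing R] (x : R) (n j : ℕ) (hn : 2 ≤ n)
    (hj1 : 1 ≤ j) (hj2 : j ≤ n - 1) :
    ∑ σ ∈ Finset.univ.filter (fun σ : Equiv.Perm (Fin n) =>
        (∀ i, σ i ≠ i) ∧ σ ⟨n - 1, by omega⟩ = ⟨j - 1, by omega⟩),
      (-1 : R) ^ cyc σ * x ^ (excIdx σ).card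
    = -x ^ (n - j) := by
  obtain ⟨m, rfl⟩ : ∃ m, n = m + 2 := ⟨n - 2, by omega⟩
  have hcore := core x m (j-1) (by omega)
  rw [show m+1-(j-1) = m+2-j by omega] at hcore
  exact hcore
end

section
/- The map φ on permutations of [n] defined by φ(σ) = R ∘ σ⁻¹ ∘ R, where R(i) = n+1-i, is an involution satisfying: σ(n) = j iff φ(σ)(n+1-j) = 1; j ∈ RLMi(σ) iff n+1-j ∈ RLMv(φ(σ)); j ∈ EXCi(σ) iff n+1-j ∈ EXCv(φ(σ)); j is a fixed point of σ iff n+1-j is a fixed point of φ(σ); and cyc(σ) = cyc(φ(σ)). -/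
open Finset

/-- Set of excedance values of a permutation: values v with σ⁻¹ v < v. -/
def excVal {n : ℕ} (σ : Equiv.Perm (Fin n)) : Finset (Fin n) :=
  Finset.univ.filter fun v => σ.symm v < v

/-- Set of right-to-left minimum indices. -/
def rlmIdx {n : ℕ} (σ : Equiv.Perm (Fin n)) : Finset (Fin n) :=
  Finset.univ.filter fun i => ∀ k, i < k → σ i < σ k

/-- Set of right-to-left minimum values. -/
def rlmVal {n : ℕ} (σ : Equiv.Perm (Fin n)) : Finset (Fin n) :=
  (rlmIdx σ).image σ

/-- The flipping map φ(σ) = R ∘ σ⁻¹ ∘ R, where `Fin.revPerm` is the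
0-based analogue of R(i) = n+1-i. -/
def flipPerm {n : ℕ} (σ : Equiv.Perm (Fin n)) : Equiv.Perm (Fin n) :=
  Fin.revPerm * σ⁻¹ * Fin.revPerm

/-! With `Fin n` read as [n] 0-based, `Fin.rev` is R. Everything rests on φ(σ) sending
`(σ j).rev` to `j.rev`: each property of σ at j turns into the mirrored property of φ(σ) at
`j.rev`, with positions and values exchanged. The cycle count is preserved because φ(σ) is
conjugate to σ⁻¹, which has the cycle type of σ. -/

theorem Equiv.Perm.card_filter_apply_eq_self {α : Type*} [Fintype α] [DecidableEq α]
    (π : Equiv.Perm α) : #(univ.filter fun a => π a = a) = Fintype.card α - π.cycleType.sum := by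
  rw [← Fintype.card_subtype]
  convert π.card_fixedPoints
  exact Iff.rfl

section

variable {n : ℕ}

theorem cyc_eq_of_cycleType_eq {σ τ : Equiv.Perm (Fin n)} (h : σ.cycleType = τ.cycleType) :
    cyc σ = cyc τ := by
  simp only [cyc, Equiv.Perm.card_filter_apply_eq_self, h]

theorem mem_rlmVal_iff {τ : Equiv.Perm (Fin n)} {v : Fin n} :
    v ∈ rlmVal τ ↔ τ.symm v ∈ rlmIdx τ := by
  rw [rlmVal, ← Equiv.coe_toEmbedding, ← map_eq_image, mem_map_equiv]

theorem mem_rlmIdx_iff_forall_lt_imp_lt {σ : Equiv.Perm (Fin n)} {i : Fin n} :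
    i ∈ rlmIdx σ ↔ ∀ k, σ k < σ i → k < i := by
  simp only [rlmIdx, mem_filter, mem_univ, true_and]
  refine forall_congr' fun k => ?_
  rcases eq_or_ne k i with rfl | hki
  · simp
  have hσ : σ k ≠ σ i := σ.injective.ne hki
  grind

theorem flipPerm_involutive : Function.Involutive (flipPerm (n := n)) := by
  intro σ
  ext i
  simp [flipPerm]

theorem flipPerm_apply_rev (σ : Equiv.Perm (Fin n)) (i : Fin n) :
    flipPerm σ i.rev = (σ.symm i).rev := by
  simp [flipPerm, Equiv.Perm.mul_apply]

theorem flipPerm_symm_apply_rev (σ : Equiv.Perm (Fin n)) (j : Fin n) :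
    (flipPerm σ).symm j.rev = (σ j).rev := by
  rw [Equiv.symm_apply_eq, flipPerm_apply_rev, Equiv.symm_apply_apply]

theorem flipPerm_apply_rev_eq_rev_iff (σ : Equiv.Perm (Fin n)) (i j : Fin n) :
    flipPerm σ j.rev = i.rev ↔ σ i = j := by
  rw [flipPerm_apply_rev, Fin.rev_inj, Equiv.symm_apply_eq, eq_comm]

theorem rev_mem_rlmIdx_flipPerm_iff (σ : Equiv.Perm (Fin n)) (i : Fin n) :
    i.rev ∈ rlmIdx (flipPerm σ) ↔ ∀ m, m < i → σ.symm m < σ.symm i := by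
  simp only [rlmIdx, mem_filter, mem_univ, true_and]
  rw [Fin.rev_surjective.forall]
  simp only [flipPerm_apply_rev, Fin.rev_lt_rev]

theorem rev_mem_rlmVal_flipPerm_iff (σ : Equiv.Perm (Fin n)) (j : Fin n) :
    j.rev ∈ rlmVal (flipPerm σ) ↔ j ∈ rlmIdx σ := by
  rw [mem_rlmVal_iff, flipPerm_symm_apply_rev, rev_mem_rlmIdx_flipPerm_iff,
    mem_rlmIdx_iff_forall_lt_imp_lt, σ.surjective.forall]
  simp only [Equiv.symm_apply_apply]

theorem rev_mem_excVal_flipPerm_iff (σ : Equiv.Perm (Fin n)) (j : Fin n) :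
    j.rev ∈ excVal (flipPerm σ) ↔ j ∈ excIdx σ := by
  simp only [excIdx, excVal, mem_filter, mem_univ, true_and, flipPerm_symm_apply_rev,
    Fin.rev_lt_rev]

theorem cycleType_flipPerm (σ : Equiv.Perm (Fin n)) : (flipPerm σ).cycleType = σ.cycleType := by
  rw [flipPerm]
  nth_rw 2 [← Fin.revPerm_symm]
  rw [← Equiv.Perm.inv_def, Equiv.Perm.cycleType_conj, Equiv.Perm.cycleType_inv]

end

/-- `Fin n` represents `[n]` 0-based; `j.rev` is `n+1-j` in 1-based terms,
`⟨n-1⟩` is `n` and `⟨0⟩` is `1`. -/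
theorem stmt7 (n : ℕ) (hn : 1 ≤ n) (σ : Equiv.Perm (Fin n)) :
    flipPerm (flipPerm σ) = σ ∧
    (∀ j : Fin n, σ ⟨n - 1, by omega⟩ = j ↔ flipPerm σ j.rev = ⟨0, by omega⟩) ∧
    (∀ j : Fin n, j ∈ rlmIdx σ ↔ j.rev ∈ rlmVal (flipPerm σ)) ∧
    (∀ j : Fin n, j ∈ excIdx σ ↔ j.rev ∈ excVal (flipPerm σ)) ∧
    (∀ j : Fin n, σ j = j ↔ flipPerm σ j.rev = j.rev) ∧
    cyc σ = cyc (flipPerm σ) := by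
  have rev_last : (⟨0, by omega⟩ : Fin n) = Fin.rev ⟨n - 1, by omega⟩ := by
    ext
    simp only [Fin.val_rev]
    omega
  refine ⟨flipPerm_involutive σ, fun j => ?_, fun j => (rev_mem_rlmVal_flipPerm_iff σ j).symm,
    fun j => (rev_mem_excVal_flipPerm_iff σ j).symm,
    fun j => (flipPerm_apply_rev_eq_rev_iff σ j j).symm,
    cyc_eq_of_cycleType_eq (cycleType_flipPerm σ).symm⟩
  rw [rev_last, flipPerm_apply_rev_eq_rev_iff]
end

section
/- For n ≥ 2, the sum over all derangements σ of [n] of (-1)^{cyc(σ)} x^{rlm(σ)} y^{exc(σ)} equals -∑_{j=1}^{n-1} x^j y^{n-j} = (xy/(x-y))(y^{n-1} - x^{n-1}) when x ≠ y. -/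
open Finset

/-!
Put `w(σ) = (-1)^cyc(σ) x^rlm(σ) y^exc(σ)` and `D_n = ∑ w(σ)` over the derangements of `[n]`.
For every permutation `(-1)^cyc(σ) = (-1)^n sign σ`. Let `a = n`, `b = n + 1` be the last two
points of `[n + 2]` and `s = (a b)`. The derangements `σ` of `[n + 2]` fall into three classes:
* `σ a = b`: then `σ s` fixes `b`, and its restriction `τ` to `[n + 1]` has no fixed point except
  possibly the last one; `w(σ) = y w(τ)`, and the `τ` fixing the last point contribute `-x D_n`,
  so the class contributes `y (D_{n+1} - x D_n)`;
* `σ b = a`, `σ a ≠ b`: then `s σ` fixes `b` and restricts to a derangement `τ`, with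
  `w(σ) = x w(τ)`;
* otherwise exchanging the adjacent values `a, b` keeps `σ` in the class, preserves exc and rlm and
  flips the sign, so the class cancels.
Hence `D_{n+2} = (x + y) D_{n+1} - x y D_n` with `D_0 = 1`, `D_1 = 0`, which is the recurrence of
`-x y ∑_{i<n} x^i y^(n-1-i) = D_{n+1}`.
-/

namespace DerangementSum

open Equiv Equiv.Perm

lemma neg_one_pow_cyc {R : Type*} [Ring R] {M : ℕ} (σ : Perm (Fin M)) :
    (-1 : R) ^ cyc σ = (-1) ^ M * (sign σ : ℤ) := by
  have hfix : #{i | σ i = i} = M - σ.cycleType.sum := by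
    have hcompl : ({i | σ i = i} : Finset (Fin M)) = σ.supportᶜ := by ext; simp
    rw [hcompl, card_compl, Fintype.card_fin, sum_cycleType]
  have hsum : σ.cycleType.sum ≤ M := by
    simpa using (sum_cycleType σ).le.trans (card_le_univ _)
  have hpar : M + (σ.cycleType.sum + Multiset.card σ.cycleType)
      = cyc σ + 2 * σ.cycleType.sum := by
    rw [cyc, hfix]; omega
  rw [sign_of_cycleType]
  push_cast
  rw [← pow_add, hpar, pow_add, pow_mul, neg_one_sq, one_pow, mul_one]

@[simp] lemma mem_excIdx {M : ℕ} {σ : Perm (Fin M)} {i : Fin M} :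
    i ∈ excIdx σ ↔ i < σ i := by
  simp [excIdx]

@[simp] lemma mem_rlmIdx {M : ℕ} {σ : Perm (Fin M)} {i : Fin M} :
    i ∈ rlmIdx σ ↔ ∀ k, i < k → σ i < σ k := by
  simp [rlmIdx]

section ExtendLast

variable {M : ℕ}

def extendLast (τ : Perm (Fin M)) : Perm (Fin (M + 1)) :=
  finSuccEquivLast.symm.permCongr τ.optionCongr

@[simp] lemma extendLast_castSucc (τ : Perm (Fin M)) (i : Fin M) :
    extendLast τ i.castSucc = (τ i).castSucc := by
  simp [extendLast, permCongr_apply]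

@[simp] lemma extendLast_last (τ : Perm (Fin M)) : extendLast τ (Fin.last M) = Fin.last M := by
  simp [extendLast, permCongr_apply]

@[simp] lemma sign_extendLast (τ : Perm (Fin M)) : sign (extendLast τ) = sign τ := by
  simp [extendLast]

lemma extendLast_injective : Function.Injective (extendLast (M := M)) := by
  intro σ τ h
  exact Equiv.ext fun i => by simpa using congr($h i.castSucc)

lemma exists_extendLast_eq {σ : Perm (Fin (M + 1))} (hσ : σ (Fin.last M) = Fin.last M) :
    ∃ τ, extendLast τ = σ := by
  set σ' := finSuccEquivLast.permCongr σ
  have hnone : σ' none = none := by simp [σ', permCongr_apply, hσ]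
  have h := decomposeOption.symm_apply_apply σ'
  simp only [decomposeOption_apply, hnone, decomposeOption_symm_apply, swap_self,
    ← Perm.one_def, one_mul] at h
  refine ⟨removeNone σ', ?_⟩
  ext i
  simp [extendLast, h, σ', permCongr_apply]

lemma sum_filter_extendLast {R : Type*} [AddCommMonoid R] (p : Perm (Fin (M + 1)) → Prop)
    [DecidablePred p] (f : Perm (Fin (M + 1)) → R) :
    ∑ σ ∈ univ.filter (fun σ => σ (Fin.last M) = Fin.last M ∧ p σ), f σ =
      ∑ τ ∈ univ.filter (fun τ => p (extendLast τ)), f (extendLast τ) := by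
  symm
  refine sum_nbij extendLast (fun τ hτ => by simpa using hτ) extendLast_injective.injOn
    (fun σ hσ => ?_) (fun _ _ => rfl)
  simp only [coe_filter, mem_univ, true_and, Set.mem_ofPred_eq] at hσ
  obtain ⟨τ, rfl⟩ := exists_extendLast_eq hσ.1
  exact ⟨τ, by simpa using hσ.2, rfl⟩

lemma excIdx_extendLast (τ : Perm (Fin M)) :
    excIdx (extendLast τ) = (excIdx τ).map Fin.castSuccEmb := by
  ext i
  cases i using Fin.lastCases <;> simp

lemma rlmIdx_extendLast (τ : Perm (Fin M)) :
    rlmIdx (extendLast τ) = insert (Fin.last M) ((rlmIdx τ).map Fin.castSuccEmb) := by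
  ext i
  cases i using Fin.lastCases <;> simp [Fin.forall_fin_succ', (Fin.castSucc_lt_last _).not_gt]

end ExtendLast

section SwapLast

variable {m : ℕ}

def swapLast (m : ℕ) : Perm (Fin (m + 2)) := swap (Fin.last m).castSucc (Fin.last (m + 1))

@[simp] lemma swapLast_castSucc_castSucc (k : Fin m) :
    swapLast m k.castSucc.castSucc = k.castSucc.castSucc :=
  swap_apply_of_ne_of_ne (by simp [Fin.ext_iff, k.isLt.ne]) (Fin.castSucc_lt_last _).ne

@[simp] lemma swapLast_castSucc_last : swapLast m (Fin.last m).castSucc = Fin.last (m + 1) :=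
  swap_apply_left _ _

@[simp] lemma swapLast_last : swapLast m (Fin.last (m + 1)) = (Fin.last m).castSucc :=
  swap_apply_right _ _

lemma swapLast_apply_eq_iff {u v : Fin (m + 2)} : swapLast m u = v ↔ u = swapLast m v :=
  swap_apply_eq_iff

lemma swapLast_mul_self : swapLast m * swapLast m = 1 := swap_mul_self _ _

lemma sign_swapLast : sign (swapLast m) = -1 :=
  sign_swap (Fin.castSucc_lt_last _).ne

lemma swapLast_apply_of_lt {u : Fin (m + 2)} (hu : u < (Fin.last m).castSucc) :
    swapLast m u = u :=
  swap_apply_of_ne_of_ne hu.ne (hu.trans (Fin.castSucc_lt_last _)).ne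

lemma lt_castSucc_last_of_ne {u : Fin (m + 2)} (ha : u ≠ (Fin.last m).castSucc)
    (hb : u ≠ Fin.last (m + 1)) : u < (Fin.last m).castSucc := by
  simp only [Fin.lt_def, ne_eq, Fin.ext_iff, Fin.val_castSucc, Fin.val_last] at ha hb ⊢
  omega

lemma lt_swapLast_iff {i u : Fin (m + 2)} (hi : i ≠ (Fin.last m).castSucc) :
    i < swapLast m u ↔ i < u := by
  simp only [swapLast, swap_apply_def, Fin.ext_iff, Fin.lt_def] at hi ⊢
  split_ifs <;> simp_all [Fin.ext_iff] <;> omega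

lemma excIdx_mul_swapLast {ρ : Perm (Fin (m + 2))}
    (hρ : ρ (Fin.last (m + 1)) = Fin.last (m + 1)) :
    excIdx (ρ * swapLast m) = insert (Fin.last m).castSucc (excIdx ρ) := by
  ext i
  simp only [mem_excIdx, mem_insert]
  cases i using Fin.lastCases with
  | last => simp [(Fin.le_last _).not_gt, (Fin.castSucc_lt_last _).ne']
  | cast j => cases j using Fin.lastCases <;> simp [hρ]

lemma rlmIdx_mul_swapLast {ρ : Perm (Fin (m + 2))}
    (hρ : ρ (Fin.last (m + 1)) = Fin.last (m + 1)) :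
    rlmIdx ρ = insert (Fin.last m).castSucc (rlmIdx (ρ * swapLast m)) := by
  have hρa : ρ (Fin.last m).castSucc < Fin.last (m + 1) := by
    rw [Fin.lt_last_iff_ne_last, ← hρ, ρ.injective.ne_iff]
    exact (Fin.castSucc_lt_last _).ne
  ext i
  simp only [mem_rlmIdx, mem_insert]
  cases i using Fin.lastCases with
  | last => simp [(Fin.le_last _).not_gt]
  | cast j =>
    cases j using Fin.lastCases with
    | last => simp [hρ, hρa, Fin.forall_fin_succ', (Fin.castSucc_lt_last _).not_gt]
    | cast k => simp [hρ, Fin.forall_fin_succ', and_right_comm]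

lemma excIdx_swapLast_mul {σ : Perm (Fin (m + 2))}
    (hσ : σ (Fin.last m).castSucc < (Fin.last m).castSucc) :
    excIdx (swapLast m * σ) = excIdx σ := by
  ext i
  simp only [mem_excIdx, Perm.mul_apply]
  by_cases hi : i = (Fin.last m).castSucc
  · rw [hi, swapLast_apply_of_lt hσ]
  · exact lt_swapLast_iff hi

lemma rlmIdx_swapLast_mul {σ : Perm (Fin (m + 2))}
    (hσ : σ (Fin.last m).castSucc < (Fin.last m).castSucc) :
    rlmIdx (swapLast m * σ) = rlmIdx σ := by
  ext i
  simp only [mem_rlmIdx, Perm.mul_apply]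
  by_cases hσi : σ i < (Fin.last m).castSucc
  · rw [swapLast_apply_of_lt hσi]
    exact forall₂_congr fun k _ => lt_swapLast_iff hσi.ne
  by_cases hi : i = Fin.last (m + 1)
  · simp [hi, (Fin.le_last _).not_gt]
  -- `i` precedes position `m`, which carries a value below both `σ i` and `swapLast m (σ i)`
  have hia : i < (Fin.last m).castSucc :=
    lt_castSucc_last_of_ne (fun h => hσi (by rwa [h])) hi
  have hlt : σ (Fin.last m).castSucc < σ i := hσ.trans_le (not_lt.1 hσi)
  have hlt' : σ (Fin.last m).castSucc < swapLast m (σ i) := (lt_swapLast_iff hσ.ne).2 hlt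
  refine iff_of_false (fun h => ?_) (fun h => (h _ hia).not_gt hlt)
  have := h _ hia
  rw [swapLast_apply_of_lt hσ] at this
  exact this.not_gt hlt'

end SwapLast

section Weight

variable {R : Type*} [CommRing R] (x y : R) {m M : ℕ}

def weight (σ : Perm (Fin M)) : R :=
  (-1) ^ cyc σ * x ^ #(rlmIdx σ) * y ^ #(excIdx σ)

lemma weight_extendLast (τ : Perm (Fin M)) :
    weight x y (extendLast τ) = -x * weight x y τ := by
  have hrlm : #(rlmIdx (extendLast τ)) = #(rlmIdx τ) + 1 := by
    rw [rlmIdx_extendLast, card_insert_of_notMem (by simp [Fin.castSucc_ne_last]), card_map]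
  simp only [weight, neg_one_pow_cyc, sign_extendLast, hrlm, excIdx_extendLast, card_map]
  ring

lemma weight_extendLast_mul_swapLast (τ : Perm (Fin (m + 1))) :
    weight x y (extendLast τ * swapLast m) = y * weight x y τ := by
  have hfix : extendLast τ (Fin.last (m + 1)) = Fin.last (m + 1) := extendLast_last τ
  have hexc : #(excIdx (extendLast τ * swapLast m)) = #(excIdx τ) + 1 := by
    rw [excIdx_mul_swapLast hfix, card_insert_of_notMem (by simp [Fin.le_last]),
      excIdx_extendLast, card_map]
  have hrlm : #(rlmIdx (extendLast τ * swapLast m)) = #(rlmIdx τ) := by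
    have h := congrArg card (rlmIdx_mul_swapLast hfix)
    rw [card_insert_of_notMem (by simpa using ⟨_, Fin.castSucc_lt_last _, Fin.le_last _⟩),
      rlmIdx_extendLast, card_insert_of_notMem (by simp [Fin.castSucc_ne_last]), card_map] at h
    omega
  simp only [weight, neg_one_pow_cyc, Perm.sign_mul, sign_extendLast, sign_swapLast, hexc, hrlm]
  push_cast
  ring

lemma weight_swapLast_mul {σ : Perm (Fin (m + 2))}
    (hσ : σ (Fin.last m).castSucc < (Fin.last m).castSucc) :
    weight x y (swapLast m * σ) = -weight x y σ := by
  simp only [weight, neg_one_pow_cyc, Perm.sign_mul, sign_swapLast, excIdx_swapLast_mul hσ,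
    rlmIdx_swapLast_mul hσ]
  push_cast
  ring

def derangementSum (M : ℕ) : R :=
  ∑ σ ∈ univ.filter (fun σ : Perm (Fin M) => ∀ i, σ i ≠ i), weight x y σ

lemma sum_weight_of_forall_castSucc_ne :
    ∑ τ ∈ univ.filter (fun τ : Perm (Fin (m + 1)) =>
        ∀ k : Fin m, τ k.castSucc ≠ k.castSucc), weight x y τ =
      derangementSum x y (m + 1) - x * derangementSum x y m := by
  rw [← sum_filter_not_add_sum_filter _ (fun τ => τ (Fin.last m) = Fin.last m), filter_filter,
    filter_filter, derangementSum, derangementSum, sub_eq_add_neg]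
  congr 1
  · exact sum_congr (filter_congr fun τ _ => by simp [Fin.forall_fin_succ', and_comm])
      fun _ _ => rfl
  · rw [filter_congr fun τ _ => and_comm, sum_filter_extendLast, mul_sum, ← sum_neg_distrib]
    refine sum_congr (filter_congr fun τ _ => ?_) fun τ _ => by rw [weight_extendLast, neg_mul]
    simp

lemma sum_weight_penult_to_last :
    ∑ σ ∈ univ.filter (fun σ : Perm (Fin (m + 2)) => (∀ i, σ i ≠ i) ∧
        σ (Fin.last m).castSucc = Fin.last (m + 1)),
      weight x y σ = y * (derangementSum x y (m + 1) - x * derangementSum x y m) := by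
  calc _ = ∑ ρ ∈ univ.filter (fun ρ : Perm (Fin (m + 2)) =>
          ρ (Fin.last (m + 1)) = Fin.last (m + 1) ∧ ∀ i, (ρ * swapLast m) i ≠ i),
        weight x y (ρ * swapLast m) := by
        refine (sum_equiv (Equiv.mulRight (swapLast m)) (fun ρ => ?_) (fun _ _ => rfl)).symm
        simp only [mem_filter, mem_univ, true_and]
        simp only [coe_mulRight, Perm.mul_apply, swapLast_castSucc_last]
        tauto
    _ = ∑ τ ∈ univ.filter (fun τ : Perm (Fin (m + 1)) =>
          ∀ i, (extendLast τ * swapLast m) i ≠ i),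
        weight x y (extendLast τ * swapLast m) := sum_filter_extendLast _ _
    _ = ∑ τ ∈ univ.filter (fun τ : Perm (Fin (m + 1)) =>
          ∀ k : Fin m, τ k.castSucc ≠ k.castSucc), y * weight x y τ := by
        refine sum_congr (filter_congr fun τ _ => ?_) fun τ _ =>
          weight_extendLast_mul_swapLast x y τ
        simp [Fin.forall_fin_succ', (Fin.castSucc_lt_last _).ne, (Fin.castSucc_lt_last _).ne']
    _ = _ := by rw [← mul_sum, sum_weight_of_forall_castSucc_ne]

lemma sum_weight_last_to_penult :
    ∑ σ ∈ univ.filter (fun σ : Perm (Fin (m + 2)) => (∀ i, σ i ≠ i) ∧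
        σ (Fin.last m).castSucc ≠ Fin.last (m + 1) ∧
        σ (Fin.last (m + 1)) = (Fin.last m).castSucc),
      weight x y σ = x * derangementSum x y (m + 1) := by
  calc _ = ∑ ρ ∈ univ.filter (fun ρ : Perm (Fin (m + 2)) =>
          ρ (Fin.last (m + 1)) = Fin.last (m + 1) ∧ (∀ i, (swapLast m * ρ) i ≠ i) ∧
            (swapLast m * ρ) (Fin.last m).castSucc ≠ Fin.last (m + 1)),
        weight x y (swapLast m * ρ) := by
        refine (sum_equiv (Equiv.mulLeft (swapLast m)) (fun ρ => ?_) (fun _ _ => rfl)).symm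
        simp only [mem_filter, mem_univ, true_and]
        simp only [coe_mulLeft, Perm.mul_apply, swapLast_apply_eq_iff, swapLast_castSucc_last]
        tauto
    _ = ∑ τ ∈ univ.filter (fun τ : Perm (Fin (m + 1)) =>
          (∀ i, (swapLast m * extendLast τ) i ≠ i) ∧
            (swapLast m * extendLast τ) (Fin.last m).castSucc ≠ Fin.last (m + 1)),
        weight x y (swapLast m * extendLast τ) := sum_filter_extendLast _ _
    _ = ∑ τ ∈ univ.filter (fun τ : Perm (Fin (m + 1)) => ∀ i, τ i ≠ i),
        x * weight x y τ := by
        refine sum_congr (filter_congr fun τ _ => ?_) fun τ hτ => ?_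
        · simp [Fin.forall_fin_succ', swapLast_apply_eq_iff, (Fin.castSucc_lt_last _).ne']
        · rw [weight_swapLast_mul, weight_extendLast, neg_mul, neg_neg]
          simpa [Fin.lt_last_iff_ne_last] using (mem_filter.1 hτ).2 (Fin.last m)
    _ = x * derangementSum x y (m + 1) := (mul_sum _ _ _).symm

lemma sum_weight_cancel :
    ∑ σ ∈ univ.filter (fun σ : Perm (Fin (m + 2)) => (∀ i, σ i ≠ i) ∧
        σ (Fin.last m).castSucc ≠ Fin.last (m + 1) ∧
        σ (Fin.last (m + 1)) ≠ (Fin.last m).castSucc),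
      weight x y σ = 0 := by
  refine sum_involution (fun σ _ => swapLast m * σ) (fun σ hσ => ?_) (fun σ _ _ h => ?_)
    (fun σ hσ => ?_) (fun σ _ => by rw [← mul_assoc, swapLast_mul_self, one_mul])
  · simp only [mem_filter, mem_univ, true_and] at hσ
    rw [weight_swapLast_mul x y (lt_castSucc_last_of_ne (hσ.1 _) hσ.2.1), add_neg_cancel]
  · have h1 : swapLast m = 1 := mul_eq_right.1 h
    simpa [h1, (Fin.castSucc_lt_last _).ne] using swapLast_castSucc_last (m := m)
  · simp only [mem_filter, mem_univ, true_and, Perm.mul_apply, ne_eq,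
      swapLast_apply_eq_iff] at hσ ⊢
    refine ⟨fun i => ?_, by simpa using hσ.1 _, by simpa using hσ.1 _⟩
    cases i using Fin.lastCases with
    | last => simpa using hσ.2.2
    | cast j =>
      cases j using Fin.lastCases with
      | last => simpa using hσ.2.1
      | cast k => simpa using hσ.1 _

end Weight

section Recurrence

variable {R : Type*} [CommRing R] (x y : R)

lemma derangementSum_add_two (m : ℕ) :
    derangementSum x y (m + 2) =
      (x + y) * derangementSum x y (m + 1) - x * y * derangementSum x y m := by
  set derangements := univ.filter fun σ : Perm (Fin (m + 2)) => ∀ i, σ i ≠ i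
  have split₁ := sum_filter_add_sum_filter_not derangements
    (fun σ => σ (Fin.last m).castSucc = Fin.last (m + 1)) (weight x y)
  have split₂ := sum_filter_add_sum_filter_not
    (derangements.filter fun σ => ¬σ (Fin.last m).castSucc = Fin.last (m + 1))
    (fun σ => σ (Fin.last (m + 1)) = (Fin.last m).castSucc) (weight x y)
  simp only [derangements, filter_filter, and_assoc, ← ne_eq] at split₁ split₂
  rw [derangementSum, ← split₁, ← split₂, sum_weight_penult_to_last,
    sum_weight_last_to_penult, sum_weight_cancel]
  ring

lemma derangementSum_zero : derangementSum x y 0 = 1 := by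
  simp [derangementSum, weight, cyc, rlmIdx, excIdx]

lemma derangementSum_one : derangementSum x y 1 = 0 := by
  simp [derangementSum, Fin.eq_zero]

lemma geom_sum₂_add_two (k : ℕ) :
    ∑ i ∈ range (k + 2), x ^ i * y ^ (k + 2 - 1 - i) =
      (x + y) * ∑ i ∈ range (k + 1), x ^ i * y ^ (k + 1 - 1 - i) -
        x * y * ∑ i ∈ range k, x ^ i * y ^ (k - 1 - i) := by
  have h₁ := geom_sum₂_succ_eq x y (n := k + 1)
  have h₂ := geom_sum₂_succ_eq x y (n := k)
  rw [show k + 1 + 1 = k + 2 from rfl] at h₁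
  rw [show k + 2 - 1 = k + 1 by omega]
  simp only [Nat.add_sub_cancel] at h₁ h₂ ⊢
  linear_combination h₁ - x * h₂

lemma derangementSum_succ (k : ℕ) :
    derangementSum x y (k + 1) = -(x * y * ∑ i ∈ range k, x ^ i * y ^ (k - 1 - i)) := by
  induction k using Nat.twoStepInduction with
  | zero => simp [derangementSum_one]
  | one => simp [derangementSum_add_two x y 0, derangementSum_one, derangementSum_zero]
  | more k ih₁ ih₂ =>
    rw [derangementSum_add_two, ih₁, ih₂, geom_sum₂_add_two]
    ring

lemma sum_Icc_pow_mul_pow (k : ℕ) :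
    ∑ j ∈ Icc 1 (k + 1), x ^ j * y ^ (k + 2 - j) =
      x * y * ∑ i ∈ range (k + 1), x ^ i * y ^ (k - i) := by
  rw [← Ico_add_one_right_eq_Icc, sum_Ico_eq_sum_range, mul_sum]
  refine sum_congr (by simp) fun i hi => ?_
  have : k + 2 - (1 + i) = k - i + 1 := by have := mem_range.1 hi; omega
  rw [this]
  ring

end Recurrence

end DerangementSum

open DerangementSum in
theorem stmt9 {R : Type*} [Field R] (n : ℕ) (x y : R) (hn : 2 ≤ n) :
    (∑ σ ∈ Finset.univ.filter (fun σ : Equiv.Perm (Fin n) => ∀ i, σ i ≠ i),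
        (-1 : R) ^ cyc σ * x ^ (rlmIdx σ).card * y ^ (excIdx σ).card
      = -∑ j ∈ Finset.Icc 1 (n - 1), x ^ j * y ^ (n - j)) ∧
    (x ≠ y →
      ∑ σ ∈ Finset.univ.filter (fun σ : Equiv.Perm (Fin n) => ∀ i, σ i ≠ i),
        (-1 : R) ^ cyc σ * x ^ (rlmIdx σ).card * y ^ (excIdx σ).card
      = x * y / (x - y) * (y ^ (n - 1) - x ^ (n - 1))) := by
  obtain ⟨k, rfl⟩ : ∃ k, n = k + 2 := ⟨n - 2, by omega⟩
  have hsum := derangementSum_succ x y (k + 1)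
  rw [derangementSum] at hsum
  have hgeom := geom_sum₂_mul x y (k + 1)
  simp only [Nat.add_sub_cancel, weight] at hsum hgeom
  rw [show k + 2 - 1 = k + 1 by omega]
  refine ⟨by rw [hsum, sum_Icc_pow_mul_pow], fun hxy => ?_⟩
  rw [hsum, div_mul_eq_mul_div, eq_div_iff (sub_ne_zero.2 hxy)]
  linear_combination (-(x * y)) * hgeom
end

section
/- Let b̄_n denote the number of derangements σ of [n] with σ(n) = 1. Then b̄_n = (n-2)·b̄_{n-1} + (n-3)·b̄_{n-2} for n ≥ 3. -/
open Finset

/-- `bbar n` is the number of derangements σ of `[n]` (modelled 0-based on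
`Fin n`) with σ(n) = 1, i.e. σ maps the last element to the first. -/
def bbar (n : ℕ) : ℕ :=
  (Finset.univ.filter (fun σ : Equiv.Perm (Fin n) =>
      (∀ i, σ i ≠ i) ∧ ∀ i : Fin n, i.val = n - 1 → (σ i).val = 0)).card

/-!
Conjugation by the transposition `(b c)` preserves derangements and fixes every `a ∉ {b, c}`,
so among the derangements of a finite set the value `σ a` is equidistributed over the other
`card α - 1` points. Hence `(n - 1) · b̄ₙ = dₙ`, and the recurrence for `b̄` is the derangement
recurrence `dₙ = (n - 1)(dₙ₋₁ + dₙ₋₂)` divided by `n - 1`.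
-/

open Equiv

section
variable {α : Type*} [DecidableEq α]

lemma swap_mul_mul_swap_mem_derangements {σ : Perm α} (hσ : σ ∈ derangements α) (x y : α) :
    swap x y * σ * swap x y ∈ derangements α := by
  intro i h
  apply hσ (swap x y i)
  simpa using congrArg (swap x y) h

lemma swap_mul_mul_swap_apply_of_apply_eq {σ : Perm α} {a b c : α} (hσ : σ a = b)
    (hb : b ≠ a) (hc : c ≠ a) : (swap b c * σ * swap b c) a = c := by
  simp [swap_apply_of_ne_of_ne hb.symm hc.symm, hσ]

variable [Fintype α]

lemma card_derangements_apply_eq_of_ne {a b c : α} (hb : b ≠ a) (hc : c ≠ a) :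
    #{σ : Perm α | σ ∈ derangements α ∧ σ a = b} =
      #{σ : Perm α | σ ∈ derangements α ∧ σ a = c} := by
  have conj_conj (σ : Perm α) : swap b c * (swap b c * σ * swap b c) * swap b c = σ := by
    ext; simp [mul_assoc]
  refine card_nbij' (fun σ => swap b c * σ * swap b c) (fun σ => swap b c * σ * swap b c)
    ?_ ?_ (fun σ _ => conj_conj σ) (fun σ _ => conj_conj σ)
  · intro σ
    simp only [coe_filter, mem_univ, true_and, Set.mem_ofPred_eq]
    exact fun ⟨hσ, hσa⟩ => ⟨swap_mul_mul_swap_mem_derangements hσ b c,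
      swap_mul_mul_swap_apply_of_apply_eq hσa hb hc⟩
  · intro σ
    simp only [coe_filter, mem_univ, true_and, Set.mem_ofPred_eq]
    rw [swap_comm]
    exact fun ⟨hσ, hσa⟩ => ⟨swap_mul_mul_swap_mem_derangements hσ c b,
      swap_mul_mul_swap_apply_of_apply_eq hσa hc hb⟩

lemma numDerangements_eq_mul_card_apply_eq {a b : α} (hb : b ≠ a) :
    numDerangements (Fintype.card α) =
      (Fintype.card α - 1) * #{σ : Perm α | σ ∈ derangements α ∧ σ a = b} := by
  have fibre_eq (k : α) (hk : k ∈ univ.erase a) :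
      #{σ ∈ {σ : Perm α | σ ∈ derangements α} | σ a = k} =
        #{σ : Perm α | σ ∈ derangements α ∧ σ a = b} := by
    rw [filter_filter]
    exact card_derangements_apply_eq_of_ne (ne_of_mem_erase hk) hb
  rw [← card_derangements_eq_numDerangements, Fintype.card_subtype,
    card_eq_sum_card_fiberwise (f := fun σ => σ a) (t := univ.erase a), sum_congr rfl fibre_eq,
    sum_const, card_erase_of_mem (mem_univ a), smul_eq_mul, card_univ]
  intro σ hσ
  exact mem_erase.2 ⟨(mem_filter.1 hσ).2 a, mem_univ _⟩

end

lemma bbar_succ (n : ℕ) :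
    bbar (n + 1) = #{σ : Perm (Fin (n + 1)) | σ ∈ derangements _ ∧ σ (Fin.last n) = 0} := by
  unfold bbar
  congr 1
  ext σ
  simp only [mem_filter, mem_univ, true_and, derangements, Set.mem_ofPred_eq,
    add_tsub_cancel_right, Fin.ext_iff, Fin.val_zero]
  refine and_congr Iff.rfl ⟨fun h => h _ rfl, fun h i hi => ?_⟩
  rwa [show i = Fin.last n from Fin.ext hi]

lemma mul_bbar_succ (n : ℕ) : n * bbar (n + 1) = numDerangements (n + 1) := by
  cases n with
  | zero => simp
  | succ k =>
    have h := numDerangements_eq_mul_card_apply_eq (Fin.last_pos (n := k)).ne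
    rw [Fintype.card_fin] at h
    rw [bbar_succ, h]
    rfl

theorem stmt13 (n : ℕ) (hn : 3 ≤ n) :
    bbar n = (n - 2) * bbar (n - 1) + (n - 3) * bbar (n - 2) := by
  obtain ⟨m, rfl⟩ : ∃ m, n = m + 3 := ⟨n - 3, by omega⟩
  simp only [show m + 3 - 2 = m + 1 from rfl, add_tsub_cancel_right]
  apply Nat.eq_of_mul_eq_mul_left (show 0 < m + 2 by omega)
  calc (m + 2) * bbar (m + 3) = numDerangements (m + 3) := mul_bbar_succ (m + 2)
    _ = (m + 2) * (numDerangements (m + 1) + numDerangements (m + 2)) :=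
        numDerangements_add_two (m + 1)
    _ = (m + 2) * ((m + 1) * bbar (m + 2) + m * bbar (m + 1)) := by
        rw [← mul_bbar_succ, ← mul_bbar_succ]; ring
end

section
/- The exponential generating function ∑_{n≥0} b̄_{n+2} x^n/n! equals e^{-x}/(1-x)², where b̄_m is the number of derangements of [m] with exactly one right-to-left minimum (equivalently, those σ with σ(m)=1). -/
open Finset PowerSeries

/-!
Composing with the transposition `(a b)` identifies the derangements `σ` with `σ b = a` with the
permutations of `α \ {b}` whose only possible fixed point is `a`, so `b̄ (n + 2) = d n + d (n + 1)`.
On exponential generating functions, multiplication by `1 - X` replaces `a n` by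
`a n - n * a (n - 1)`; by the recurrences of the derangement numbers it sends the egf of
`b̄ (n + 2)` to that of `d n`, and that one to the egf `e^{-x}` of `(-1) ^ n`.
-/

open Equiv Function

variable {α : Type*} [DecidableEq α]

def derangementsApplyEqEquiv {a b : α} (hab : a ≠ b) :
    {σ : Perm α // σ ∈ derangements α ∧ σ b = a} ≃
      {f : Perm {x // x ≠ b} // fixedPoints f ⊆ {⟨a, hab⟩}} where
  toFun σ :=
    have hb : ∀ x, (swap a b * σ.1) x ≠ b ↔ x ≠ b := fun x => by
      rw [not_iff_not, Perm.mul_apply, swap_apply_eq_iff, swap_apply_right,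
        ← σ.1.injective.eq_iff (b := b), σ.2.2]
    ⟨(swap a b * σ.1).subtypePerm hb, fun x hx => by
      have hx : swap a b (σ.1 x) = x := congrArg Subtype.val hx
      by_contra hxa
      have hxa : x.1 ≠ a := fun h => hxa (Subtype.ext h)
      rw [swap_apply_eq_iff, swap_apply_of_ne_of_ne hxa x.2] at hx
      exact σ.2.1 x hx⟩
  invFun f := ⟨swap a b * Perm.ofSubtype f.1, by
    have hfb : Perm.ofSubtype f.1 b = b := Perm.ofSubtype_apply_of_not_mem f.1 (not_not_intro rfl)
    refine ⟨fun x hx => ?_, by rw [Perm.mul_apply, hfb, swap_apply_right]⟩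
    rw [Perm.mul_apply, swap_apply_eq_iff] at hx
    by_cases hxb : x = b
    · rw [hxb, hfb, swap_apply_right] at hx
      exact hab hx.symm
    · rw [Perm.ofSubtype_apply_of_mem f.1 hxb] at hx
      by_cases hxa : x = a
      · subst hxa
        rw [swap_apply_left] at hx
        exact (f.1 ⟨x, hxb⟩).2 hx
      · rw [swap_apply_of_ne_of_ne hxa hxb] at hx
        exact hxa (congrArg Subtype.val (f.2 (Subtype.ext hx)))⟩
  left_inv σ := Subtype.ext <| by
    dsimp only
    rw [Perm.ofSubtype_subtypePerm, ← mul_assoc, swap_mul_self, one_mul]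
    rintro x hx rfl
    simp [σ.2.2] at hx
  right_inv f := Subtype.ext <| by
    simp only [← mul_assoc, swap_mul_self, one_mul, Perm.subtypePerm_ofSubtype]

theorem card_derangements_apply_eq [Fintype α] {a b : α} (hab : a ≠ b) {n : ℕ}
    (hn : Fintype.card α = n + 2) :
    Fintype.card {σ : Perm α // σ ∈ derangements α ∧ σ b = a} =
      numDerangements n + numDerangements (n + 1) := by
  have hb : Fintype.card {x // x ≠ b} = n + 1 := by
    rw [Fintype.card_subtype_compl, Fintype.card_subtype_eq, hn]; rfl
  have ha : Fintype.card ({⟨a, hab⟩}ᶜ : Set {x // x ≠ b}) = n := by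
    rw [Fintype.card_compl_set, hb, Fintype.card_unique]; rfl
  rw [Fintype.card_congr ((derangementsApplyEqEquiv hab).trans
      (derangements.atMostOneFixedPointEquivSum_derangements _)), Fintype.card_sum,
    card_derangements_eq_numDerangements, card_derangements_eq_numDerangements, ha, hb]

theorem bbar_add_two (n : ℕ) : bbar (n + 2) = numDerangements n + numDerangements (n + 1) := by
  have h0 : (0 : Fin (n + 2)) ≠ Fin.last (n + 1) := Fin.last_pos.ne
  rw [bbar, ← Fintype.card_subtype, ← card_derangements_apply_eq h0 (Fintype.card_fin _)]
  refine Fintype.card_congr (subtypeEquivRight fun σ => and_congr Iff.rfl ?_)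
  refine ⟨fun h => Fin.ext (h _ rfl), fun h i hi => ?_⟩
  obtain rfl : i = Fin.last (n + 1) := Fin.ext hi
  rw [h, Fin.val_zero]

section Egf

variable {K : Type*} [Field K]

open scoped Nat

def egf (a : ℕ → K) : K⟦X⟧ := mk fun n => a n / n !

theorem egf_mul_one_sub_X [CharZero K] (a : ℕ → K) :
    egf a * (1 - X) = egf fun n => a n - n * a (n - 1) := by
  ext (_ | n)
  · simp [egf]
  · rw [mul_sub, mul_one, map_sub, coeff_succ_mul_X]
    simp only [egf, coeff_mk, Nat.factorial_succ, Nat.cast_mul, add_tsub_cancel_right]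
    field_simp

theorem egf_neg_one_pow [Algebra ℚ K] : egf (fun n => (-1 : K) ^ n) = rescale (-1) (exp K) := by
  ext n
  simp [egf, coeff_exp, div_eq_mul_inv]

theorem egf_numDerangements_mul_one_sub_X [CharZero K] :
    egf (fun n => (numDerangements n : K)) * (1 - X) = egf fun n => (-1) ^ n := by
  rw [egf_mul_one_sub_X]
  congr 1
  funext n
  cases n with
  | zero => simp
  | succ n =>
    have := congrArg (Int.cast : ℤ → K) (numDerangements_succ n)
    push_cast at this
    rw [this, add_tsub_cancel_right]
    push_cast
    ring

theorem egf_bbar_mul_one_sub_X [CharZero K] :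
    egf (fun n => (bbar (n + 2) : K)) * (1 - X) = egf fun n => (numDerangements n : K) := by
  rw [egf_mul_one_sub_X]
  congr 1
  funext n
  cases n with
  | zero => simp [bbar_add_two]
  | succ n =>
    simp only [bbar_add_two, numDerangements_add_two, add_tsub_cancel_right]
    push_cast
    ring

end Egf

/-- ∑ bbar(n+2) xⁿ/n! = e^{-x}/(1-x)², stated multiplied through by (1-x)². -/
theorem stmt14 :
    (PowerSeries.mk fun n => (bbar (n + 2) : ℚ) / (n.factorial : ℚ)) *
      (1 - PowerSeries.X) ^ 2
    = PowerSeries.rescale (-1 : ℚ) (PowerSeries.exp ℚ) := by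
  change egf (fun n => (bbar (n + 2) : ℚ)) * (1 - X) ^ 2 = _
  rw [sq, ← mul_assoc, egf_bbar_mul_one_sub_X, egf_numDerangements_mul_one_sub_X, egf_neg_one_pow]
end

section
/- For n ≥ 3, the number of derangements of [n] with exactly n-2 right-to-left minima equals (n-3) + (n-2)². -/
open Finset

def gfun (a b j m : ℕ) (i : ℕ) : ℕ :=
  if i = 0 then a else if i = j then b
  else if i < j then i - 1 else if i ≤ m then i - 2 else i - 1

def Valid (n a b j m : ℕ) : Prop :=
  3 ≤ n ∧ 1 ≤ j ∧ j ≤ n - 2 ∧ j ≤ m ∧ m ≤ n - 1 ∧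
    ((a = m - 1 ∧ b = n - 1 ∧ 2 ≤ m) ∨ (a = n - 1 ∧ b = m - 1 ∧ j + 2 ≤ m))

lemma gfun_lt {n a b j m : ℕ} (h : Valid n a b j m) {i : ℕ} (hi : i < n) :
    gfun a b j m i < n := by
  obtain ⟨h3, h1, h2, hjm, hm, hab⟩ := h
  unfold gfun; split_ifs <;> omega

def gf {n a b j m : ℕ} (h : Valid n a b j m) : Fin n → Fin n :=
  fun i => ⟨gfun a b j m i.val, gfun_lt h i.isLt⟩

lemma gf_inj {n a b j m : ℕ} (h : Valid n a b j m) : Function.Injective (gf h) := by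
  intro x y hxy
  obtain ⟨h3, h1, h2, hjm, hm, hab⟩ := h
  have hx := x.isLt; have hy := y.isLt
  have hv : gfun a b j m x.val = gfun a b j m y.val := congrArg Fin.val hxy
  apply Fin.ext
  unfold gfun at hv
  rcases hab with ⟨ha, hb, hc⟩ | ⟨ha, hb, hc⟩ <;> (split_ifs at hv <;> omega)

noncomputable def gp {n a b j m : ℕ} (h : Valid n a b j m) : Equiv.Perm (Fin n) :=
  Equiv.ofBijective (gf h) (Finite.injective_iff_bijective.mp (gf_inj h))

lemma gp_val {n a b j m : ℕ} (h : Valid n a b j m) (i : Fin n) :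
    ((gp h) i).val = gfun a b j m i.val := rfl

lemma gp_ne {n a b j m : ℕ} (h : Valid n a b j m) : ∀ i, gp h i ≠ i := by
  intro i hcon
  have hv : gfun a b j m i.val = i.val := by rw [← gp_val h i, hcon]
  obtain ⟨h3, h1, h2, hjm, hm, hab⟩ := h
  have hx := i.isLt
  unfold gfun at hv
  rcases hab with ⟨ha, hb, hc⟩ | ⟨ha, hb, hc⟩ <;> (split_ifs at hv <;> omega)
lemma mem_rlmIdx {n : ℕ} (σ : Equiv.Perm (Fin n)) (i : Fin n) :
    i ∈ rlmIdx σ ↔ ∀ k, i < k → σ i < σ k := by simp [rlmIdx]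

set_option maxHeartbeats 1600000 in
lemma rlm_gp {n a b j m : ℕ} (h : Valid n a b j m) :
    rlmIdx (gp h) = univ.filter (fun i : Fin n => i.val ≠ 0 ∧ i.val ≠ j) := by
  obtain ⟨h3, h1, h2, hjm, hm, hab⟩ := h
  ext i
  rw [mem_rlmIdx, mem_filter]
  simp only [mem_univ, true_and]
  have hx := i.isLt
  constructor
  · intro hall
    constructor
    · intro hi0
      -- i = 0 : exhibit a later position with smaller value
      rcases eq_or_ne j 1 with hj1 | hj1
      · have hk : i < (⟨2, by omega⟩ : Fin n) := show (i : ℕ) < 2 by omega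
        have key : gfun a b j m i.val < gfun a b j m 2 := hall _ hk
        rw [hi0] at key
        unfold gfun at key
        rcases hab with ⟨ha, hb, hc⟩ | ⟨ha, hb, hc⟩ <;> (split_ifs at key <;> first | omega | simp_all)
      · have hk : i < (⟨1, by omega⟩ : Fin n) := show (i : ℕ) < 1 by omega
        have key : gfun a b j m i.val < gfun a b j m 1 := hall _ hk
        rw [hi0] at key
        unfold gfun at key
        rcases hab with ⟨ha, hb, hc⟩ | ⟨ha, hb, hc⟩ <;> (split_ifs at key <;> first | omega | simp_all)
    · intro hij
      rcases hab with ⟨ha, hb, hc⟩ | ⟨ha, hb, hc⟩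
      · -- family A : σ j = n-1, witness k = n-1
        have hk : i < (⟨n-1, by omega⟩ : Fin n) := show (i : ℕ) < n-1 by omega
        have key : gfun a b j m i.val < gfun a b j m (n-1) := hall _ hk
        rw [hij] at key
        unfold gfun at key
        split_ifs at key <;> first | omega | simp_all
      · -- family B : σ j = m-1, witness k = j+1
        have hk : i < (⟨j+1, by omega⟩ : Fin n) := show (i : ℕ) < j+1 by omega
        have key : gfun a b j m i.val < gfun a b j m (j+1) := hall _ hk
        rw [hij] at key
        unfold gfun at key
        split_ifs at key <;> first | omega | simp_all
  · rintro ⟨hi0, hij⟩ k hk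
    rw [Fin.lt_def] at hk
    show gfun a b j m i.val < gfun a b j m k.val
    have hy := k.isLt
    unfold gfun
    rcases hab with ⟨ha, hb, hc⟩ | ⟨ha, hb, hc⟩ <;> (split_ifs <;> omega)

lemma card_filter_ne {n j : ℕ} (h3 : 3 ≤ n) (h1 : 1 ≤ j) (h2 : j ≤ n - 2) :
    (univ.filter (fun i : Fin n => i.val ≠ 0 ∧ i.val ≠ j)).card = n - 2 := by
  have hset : univ.filter (fun i : Fin n => i.val ≠ 0 ∧ i.val ≠ j)
      = (univ.erase ⟨j, by omega⟩).erase ⟨0, by omega⟩ := by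
    ext i
    simp only [mem_filter, mem_univ, true_and, mem_erase, ne_eq, Fin.ext_iff, Fin.val_mk]
    tauto
  rw [hset, card_erase_of_mem, card_erase_of_mem (mem_univ _), card_univ, Fintype.card_fin]
  · omega
  · rw [mem_erase]
    refine ⟨?_, mem_univ _⟩
    simp only [ne_eq, Fin.ext_iff, Fin.val_mk]
    omega

lemma gp_mem {n a b j m : ℕ} (h : Valid n a b j m) :
    (∀ i, gp h i ≠ i) ∧ (rlmIdx (gp h)).card = n - 2 := by
  refine ⟨gp_ne h, ?_⟩
  rw [rlm_gp h]
  exact card_filter_ne h.1 h.2.1 h.2.2.1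
lemma rlm_lt {n : ℕ} (σ : Equiv.Perm (Fin n)) (hd : ∀ i, σ i ≠ i) {i : Fin n}
    (hi : i ∈ rlmIdx σ) : (σ i).val < i.val := by
  have hmem : ∀ k, i < k → σ i < σ k := (mem_rlmIdx σ i).mp hi
  have hsub : (Finset.Ici i).image σ ⊆ Finset.Ici (σ i) := by
    intro x hx
    simp only [mem_image, mem_Ici] at hx ⊢
    obtain ⟨k, hk, rfl⟩ := hx
    rcases eq_or_lt_of_le hk with rfl | hlt
    · exact le_refl _
    · exact (hmem k hlt).le
  have h1 : (Finset.Ici i).card ≤ (Finset.Ici (σ i)).card := by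
    rw [← Finset.card_image_of_injective (Finset.Ici i) σ.injective]
    exact card_le_card hsub
  rw [Fin.card_Ici, Fin.card_Ici] at h1
  have h2 := hd i
  have hne : (σ i).val ≠ i.val := fun hh => h2 (Fin.ext hh)
  have := i.isLt; have := (σ i).isLt
  omega

lemma rlm_ge {n : ℕ} (σ : Equiv.Perm (Fin n)) {i : Fin n} (hi : i ∈ rlmIdx σ) :
    ((rlmIdx σ).filter (· < i)).card ≤ (σ i).val := by
  have hsub : ((rlmIdx σ).filter (· < i)).image σ ⊆ Finset.Iio (σ i) := by
    intro x hx
    simp only [mem_image, mem_filter, mem_Iio] at hx ⊢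
    obtain ⟨k, ⟨hkR, hki⟩, rfl⟩ := hx
    exact ((mem_rlmIdx σ k).mp hkR) i hki
  have h1 := card_le_card hsub
  rw [Finset.card_image_of_injective _ σ.injective, Fin.card_Iio] at h1
  exact h1
lemma structure_thm {n : ℕ} (hn : 3 ≤ n) (σ : Equiv.Perm (Fin n))
    (hd : ∀ i, σ i ≠ i) (hc : (rlmIdx σ).card = n - 2) :
    ∃ a b j m, ∃ (h : Valid n a b j m), σ = gp h := by
  classical
  have hnn : 0 < n := by omega
  have h0 : (⟨0, hnn⟩ : Fin n) ∉ rlmIdx σ := fun hmem => by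
    have := rlm_lt σ hd hmem; simp only [Fin.val_mk] at this; omega
  have hlast : (⟨n-1, by omega⟩ : Fin n) ∈ rlmIdx σ := by
    rw [mem_rlmIdx]
    intro k hk
    exfalso
    rw [Fin.lt_def] at hk
    have := k.isLt
    simp only [Fin.val_mk] at hk
    omega
  have hCcard : (univ \ rlmIdx σ).card = 2 := by
    rw [card_sdiff_of_subset (subset_univ _), card_univ, Fintype.card_fin, hc]; omega
  obtain ⟨x, y, hxy, hC⟩ := Finset.card_eq_two.mp hCcard
  have h0C : (⟨0, hnn⟩ : Fin n) ∈ univ \ rlmIdx σ := by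
    rw [mem_sdiff]; exact ⟨mem_univ _, h0⟩
  have hexj : ∃ jF : Fin n, jF ∉ rlmIdx σ ∧ jF.val ≠ 0 ∧
      ∀ i : Fin n, i.val ≠ 0 → i ≠ jF → i ∈ rlmIdx σ := by
    rw [hC, mem_insert, mem_singleton] at h0C
    have hall : ∀ i : Fin n, i ∉ rlmIdx σ → (i = x ∨ i = y) := by
      intro i hi
      have hmem : i ∈ univ \ rlmIdx σ := by rw [mem_sdiff]; exact ⟨mem_univ _, hi⟩
      rw [hC] at hmem; simpa using hmem
    have hxR : x ∉ rlmIdx σ := by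
      have hmem : x ∈ univ \ rlmIdx σ := by rw [hC]; simp
      rw [mem_sdiff] at hmem; exact hmem.2
    have hyR : y ∉ rlmIdx σ := by
      have hmem : y ∈ univ \ rlmIdx σ := by rw [hC]; simp
      rw [mem_sdiff] at hmem; exact hmem.2
    rcases h0C with h0x | h0y
    · refine ⟨y, hyR, ?_, ?_⟩
      · intro hy0
        exact hxy (Fin.ext (by rw [← h0x, hy0])).symm
      · intro i hi0 hiy
        by_contra hiR
        rcases hall i hiR with rfl | rfl
        · exact hi0 (congrArg Fin.val h0x.symm)
        · exact hiy rfl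
    · refine ⟨x, hxR, ?_, ?_⟩
      · intro hx0
        exact hxy (Fin.ext (by rw [← h0y, hx0]))
      · intro i hi0 hix
        by_contra hiR
        rcases hall i hiR with rfl | rfl
        · exact hix rfl
        · exact hi0 (congrArg Fin.val h0y.symm)
  obtain ⟨jF, hjR, hj0, hjall⟩ := hexj
  set j := jF.val with hjdef
  have hjlt : j < n := jF.isLt
  have hjle : j ≤ n - 2 := by
    by_contra hcon
    exact hjR (by
      have hje : jF = ⟨n-1, by omega⟩ := Fin.ext (by simp only [Fin.val_mk]; omega)
      rw [hje]; exact hlast)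
  have hj1 : 1 ≤ j := by omega
  have hup : ∀ i : Fin n, i ∈ rlmIdx σ → (σ i).val < i.val := fun i hi => rlm_lt σ hd hi
  -- lower bounds on σ i for rlm indices
  have hsplit : ∀ i : Fin n, (Finset.Iio i) ⊆ ((rlmIdx σ).filter (· < i)) ∪ {⟨0, hnn⟩, jF} := by
    intro i k hk
    rw [mem_Iio] at hk
    rw [mem_union, mem_insert, mem_singleton]
    by_cases hkR : k ∈ rlmIdx σ
    · left; rw [mem_filter]; exact ⟨hkR, hk⟩
    · right
      by_cases hk0 : k.val = 0
      · left; exact Fin.ext hk0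
      · right; by_contra hkj; exact hkR (hjall k hk0 hkj)
  have hlow : ∀ i : Fin n, i ∈ rlmIdx σ → i.val ≤ (σ i).val + 2 := by
    intro i hi
    have h1 : (Finset.Iio i).card ≤ ((rlmIdx σ).filter (· < i)).card + 2 :=
      calc (Finset.Iio i).card
          ≤ (((rlmIdx σ).filter (· < i)) ∪ {⟨0, hnn⟩, jF}).card := card_le_card (hsplit i)
        _ ≤ ((rlmIdx σ).filter (· < i)).card + ({⟨0, hnn⟩, jF} : Finset (Fin n)).card :=
            card_union_le _ _
        _ ≤ ((rlmIdx σ).filter (· < i)).card + 2 := by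
            have h2 : ({⟨0, hnn⟩, jF} : Finset (Fin n)).card ≤ 2 :=
              le_trans (card_insert_le _ _) (by simp)
            omega
    rw [Fin.card_Iio] at h1
    have := rlm_ge σ hi
    omega
  have hlow1 : ∀ i : Fin n, i ∈ rlmIdx σ → i.val < j → i.val ≤ (σ i).val + 1 := by
    intro i hi hij
    have hsub2 : (Finset.Iio i) ⊆ ((rlmIdx σ).filter (· < i)) ∪ {⟨0, hnn⟩} := by
      intro k hk
      have hmem := hsplit i hk
      rw [mem_union, mem_insert, mem_singleton] at hmem
      rw [mem_union, mem_singleton]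
      rcases hmem with h | h | h
      · left; exact h
      · right; exact h
      · exfalso
        rw [mem_Iio, Fin.lt_def] at hk
        rw [h] at hk
        omega
    have h1 : (Finset.Iio i).card ≤ ((rlmIdx σ).filter (· < i)).card + 1 :=
      calc (Finset.Iio i).card
          ≤ (((rlmIdx σ).filter (· < i)) ∪ {⟨0, hnn⟩}).card := card_le_card hsub2
        _ ≤ ((rlmIdx σ).filter (· < i)).card + 1 := by
            have := card_union_le ((rlmIdx σ).filter (· < i)) ({⟨0, hnn⟩} : Finset (Fin n))
            simpa using this
    rw [Fin.card_Iio] at h1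
    have := rlm_ge σ hi
    omega
  -- forced values
  have hvlow : ∀ i : Fin n, 0 < i.val → i.val < j → (σ i).val = i.val - 1 := by
    intro i h0i hij
    have hiR : i ∈ rlmIdx σ :=
      hjall i (by omega) (fun he => by rw [he] at hij; omega)
    have := hup i hiR; have := hlow1 i hiR hij; omega
  have hv2 : ∀ i : Fin n, j < i.val → (σ i).val = i.val - 1 ∨ (σ i).val = i.val - 2 := by
    intro i hij
    have hiR : i ∈ rlmIdx σ :=
      hjall i (by omega) (fun he => by rw [he] at hij; omega)
    have := hup i hiR; have := hlow i hiR; omega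
  -- up-closure of "high" positions
  have hIstep : ∀ i : ℕ, j < i → i + 1 ≤ n - 1 → ∀ (hi : i < n) (hi1 : i+1 < n),
      (σ ⟨i, hi⟩).val = i - 1 → (σ ⟨i+1, hi1⟩).val = i := by
    intro i hji hi1n hi hi1 hval
    have hR : (⟨i, hi⟩ : Fin n) ∈ rlmIdx σ :=
      hjall _ (by simp only [Fin.val_mk]; omega) (fun he => by
        have := congrArg Fin.val he; simp only [Fin.val_mk] at this; omega)
    have hlt : (⟨i, hi⟩ : Fin n) < ⟨i+1, hi1⟩ := show i < i + 1 by omega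
    have hmono := (mem_rlmIdx σ _).mp hR _ hlt
    rw [Fin.lt_def, hval] at hmono
    have h2 := hv2 ⟨i+1, hi1⟩ (by simp only [Fin.val_mk]; omega)
    simp only [Fin.val_mk] at h2 ⊢
    omega
  have hI : ∀ d i : ℕ, j < i → i + d ≤ n - 1 → ∀ (hi : i < n) (hid : i + d < n),
      (σ ⟨i, hi⟩).val = i - 1 → (σ ⟨i+d, hid⟩).val = i + d - 1 := by
    intro d
    induction d with
    | zero => intro i _ _ hi hid hv; exact hv
    | succ d ih =>
      intro i hji hbound hi hid hv
      have h1 : (σ ⟨i+d, by omega⟩).val = i + d - 1 :=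
        ih i hji (by omega) hi (by omega) hv
      have h2 := hIstep (i+d) (by omega) (by omega) (by omega) (by omega) h1
      have : i + (d+1) - 1 = i + d := by omega
      rw [this]
      exact h2
  -- the cutoff m
  obtain ⟨m, hjm, hmn, hlowval, hhighval⟩ :
      ∃ m, j ≤ m ∧ m ≤ n - 1 ∧
        (∀ i : Fin n, j < i.val → i.val ≤ m → (σ i).val = i.val - 2) ∧
        (∀ i : Fin n, j < i.val → m < i.val → (σ i).val = i.val - 1) := by
    set Lo := univ.filter (fun i : Fin n => j < i.val ∧ (σ i).val = i.val - 2) with hLodef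
    by_cases hne : Lo.Nonempty
    · have hmaxmem : (Lo.max' hne) ∈ univ.filter
          (fun i : Fin n => j < i.val ∧ (σ i).val = i.val - 2) := Lo.max'_mem hne
      rw [mem_filter] at hmaxmem
      obtain ⟨-, hjmax, hmaxval⟩ := hmaxmem
      have hmaxlt := (Lo.max' hne).isLt
      refine ⟨(Lo.max' hne).val, le_of_lt hjmax, by omega, ?_, ?_⟩
      · intro i hji him
        rcases hv2 i hji with hbad | hgood
        · exfalso
          rcases eq_or_lt_of_le him with heq | hlt2
          · -- i.val = max'.val : contradiction with hmaxval vs hbad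
            have hie : i = Lo.max' hne := Fin.ext heq
            rw [hie] at hbad
            omega
          · have hkey := hI ((Lo.max' hne).val - i.val) i.val hji (by omega) i.isLt
              (by omega) hbad
            have hEq : (⟨i.val + ((Lo.max' hne).val - i.val), by omega⟩ : Fin n)
                = Lo.max' hne := Fin.ext (by simp only [Fin.val_mk]; omega)
            rw [hEq] at hkey
            omega
        · exact hgood
      · intro i hji hmi
        rcases hv2 i hji with h | h
        · exact h
        · exfalso
          have hiLo : i ∈ Lo := by rw [hLodef, mem_filter]; exact ⟨mem_univ _, hji, h⟩
          have := Lo.le_max' i hiLo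
          rw [Fin.le_def] at this
          omega
    · refine ⟨j, le_refl _, by omega, ?_, ?_⟩
      · intro i hji him; omega
      · intro i hji _
        rcases hv2 i hji with h | h
        · exact h
        · exact absurd ⟨i, by rw [hLodef, mem_filter]; exact ⟨mem_univ _, hji, h⟩⟩ hne
  -- values at positions 0 and jF
  have hmlt : m - 1 < n := by omega
  have hn1lt : n - 1 < n := by omega
  have hKey : (σ ⟨0, hnn⟩ = ⟨n-1, hn1lt⟩ ∧ σ jF = ⟨m-1, hmlt⟩) ∨
              (σ ⟨0, hnn⟩ = ⟨m-1, hmlt⟩ ∧ σ jF = ⟨n-1, hn1lt⟩) := by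
    set i0 := σ.symm ⟨n-1, hn1lt⟩ with hi0def
    set i1 := σ.symm ⟨m-1, hmlt⟩ with hi1def
    have hs0 : σ i0 = ⟨n-1, hn1lt⟩ := Equiv.apply_symm_apply σ _
    have hs1 : σ i1 = ⟨m-1, hmlt⟩ := Equiv.apply_symm_apply σ _
    have hc0 : i0.val = 0 ∨ i0 = jF := by
      by_contra hcon
      push_neg at hcon
      have hR := hjall i0 hcon.1 hcon.2
      have hlt := hup i0 hR
      rw [hs0] at hlt
      simp only [Fin.val_mk] at hlt
      have := i0.isLt; omega
    have hc1 : i1.val = 0 ∨ i1 = jF := by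
      by_contra hcon
      push_neg at hcon
      have hv1 : (σ i1).val = m - 1 := by rw [hs1]
      have h0i : 0 < i1.val := Nat.pos_of_ne_zero hcon.1
      rcases lt_trichotomy i1.val j with h | h | h
      · have := hvlow i1 h0i h; omega
      · exact absurd (Fin.ext h) hcon.2
      · by_cases hle : i1.val ≤ m
        · have := hlowval i1 h hle; omega
        · have := hhighval i1 h (by omega); omega
    have hne01 : i0 ≠ i1 := by
      intro he
      have heq : (⟨n-1, hn1lt⟩ : Fin n) = ⟨m-1, hmlt⟩ := by rw [← hs0, ← hs1, he]
      have := congrArg Fin.val heq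
      simp only [Fin.val_mk] at this
      omega
    rcases hc0 with h00 | h0j
    · have hi0e : i0 = ⟨0, hnn⟩ := Fin.ext h00
      left
      constructor
      · rw [← hi0e]; exact hs0
      · rcases hc1 with h10 | h1j
        · exact absurd (hi0e.trans (Fin.ext h10).symm) hne01
        · rw [← h1j]; exact hs1
    · right
      constructor
      · rcases hc1 with h10 | h1j
        · have hi1e : i1 = ⟨0, hnn⟩ := Fin.ext h10
          rw [← hi1e]; exact hs1
        · exact absurd (h0j.trans h1j.symm) hne01
      · rw [← h0j]; exact hs0
  rcases hKey with ⟨hv0, hvj⟩ | ⟨hv0, hvj⟩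
  · -- family B : σ 0 = n-1, σ j = m-1
    have hvjval : (σ jF).val = m - 1 := by rw [hvj]
    have hv0val : (σ ⟨0, hnn⟩).val = n - 1 := by rw [hv0]
    have hmj : m ≠ j := by
      intro he
      apply hjR
      rw [mem_rlmIdx]
      intro k hk
      have hkj : j < k.val := hk
      have hkval : (σ k).val = k.val - 1 := hhighval k hkj (by omega)
      rw [Fin.lt_def]
      omega
    have hmj1 : m ≠ j + 1 := by
      intro he
      apply hd jF
      apply Fin.ext
      rw [hvjval]
      omega
    have hval : Valid n (n-1) (m-1) j m :=
      ⟨hn, hj1, hjle, hjm, hmn, Or.inr ⟨rfl, rfl, by omega⟩⟩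
    refine ⟨n-1, m-1, j, m, hval, ?_⟩
    apply Equiv.ext
    intro i
    apply Fin.ext
    show (σ i).val = gfun (n-1) (m-1) j m i.val
    have hx := i.isLt
    unfold gfun
    split_ifs with c1 c2 c3 c4
    · have he : i = ⟨0, hnn⟩ := Fin.ext c1
      rw [he, hv0]
    · have he : i = jF := Fin.ext c2
      rw [he, hvjval]
    · exact hvlow i (by omega) c3
    · exact hlowval i (by omega) c4
    · exact hhighval i (by omega) (by omega)
  · -- family A : σ 0 = m-1, σ j = n-1
    have hvjval : (σ jF).val = n - 1 := by rw [hvj]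
    have hv0val : (σ ⟨0, hnn⟩).val = m - 1 := by rw [hv0]
    have h2m : 2 ≤ m := by
      by_contra hcon
      apply hd ⟨0, hnn⟩
      apply Fin.ext
      rw [hv0val]
      simp only [Fin.val_mk]
      omega
    have hval : Valid n (m-1) (n-1) j m :=
      ⟨hn, hj1, hjle, hjm, hmn, Or.inl ⟨rfl, rfl, h2m⟩⟩
    refine ⟨m-1, n-1, j, m, hval, ?_⟩
    apply Equiv.ext
    intro i
    apply Fin.ext
    show (σ i).val = gfun (m-1) (n-1) j m i.val
    have hx := i.isLt
    unfold gfun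
    split_ifs with c1 c2 c3 c4
    · have he : i = ⟨0, hnn⟩ := Fin.ext c1
      rw [he, hv0]
    · have he : i = jF := Fin.ext c2
      rw [he, hvjval]
    · exact hvlow i (by omega) c3
    · exact hlowval i (by omega) c4
    · exact hhighval i (by omega) (by omega)
def pj (p : ℕ × ℕ) : ℕ := if p.1 ≤ p.2 then p.1 else p.2
def pm (p : ℕ × ℕ) : ℕ := if p.1 ≤ p.2 then p.2 else p.1 + 1
def pa (n : ℕ) (p : ℕ × ℕ) : ℕ := if p.1 ≤ p.2 then p.2 - 1 else n - 1
def pb (n : ℕ) (p : ℕ × ℕ) : ℕ := if p.1 ≤ p.2 then n - 1 else p.1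

def Pset (n : ℕ) : Finset (ℕ × ℕ) :=
  ((Finset.Icc 1 (n-2)) ×ˢ (Finset.Icc 1 (n-1))).erase (1, 1)

lemma mem_Pset {n : ℕ} {p : ℕ × ℕ} :
    p ∈ Pset n ↔ (p ≠ (1,1) ∧ 1 ≤ p.1 ∧ p.1 ≤ n - 2 ∧ 1 ≤ p.2 ∧ p.2 ≤ n - 1) := by
  unfold Pset
  rw [mem_erase, mem_product, mem_Icc, mem_Icc]
  tauto

lemma valid_of_mem {n : ℕ} (hn : 3 ≤ n) {p : ℕ × ℕ} (hp : p ∈ Pset n) :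
    Valid n (pa n p) (pb n p) (pj p) (pm p) := by
  obtain ⟨u, v⟩ := p
  rw [mem_Pset] at hp
  obtain ⟨hne, h1, h2, h3, h4⟩ := hp
  have hne' : ¬(u = 1 ∧ v = 1) := fun ⟨a, b⟩ => hne (by rw [a, b])
  simp only at h1 h2 h3 h4
  unfold pa pb pj pm
  by_cases huv : u ≤ v
  · simp only [huv, if_true]
    exact ⟨hn, by omega, by omega, by omega, by omega, Or.inl ⟨rfl, rfl, by omega⟩⟩
  · simp only [huv, if_false]
    exact ⟨hn, by omega, by omega, by omega, by omega, Or.inr ⟨by omega, by omega, by omega⟩⟩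

lemma gp_congr {n a b j m a' b' j' m' : ℕ} (h : Valid n a b j m) (h' : Valid n a' b' j' m')
    (ha : a = a') (hb : b = b') (hj : j = j') (hm : m = m') : gp h = gp h' := by
  subst ha; subst hb; subst hj; subst hm; rfl

lemma pset_card {n : ℕ} (hn : 3 ≤ n) : (Pset n).card = (n-2) * (n-1) - 1 := by
  unfold Pset
  rw [card_erase_of_mem, card_product, Nat.card_Icc, Nat.card_Icc]
  · congr 2 <;> omega
  · rw [mem_product, mem_Icc, mem_Icc]
    omega

lemma pset_recover {n : ℕ} (hn : 3 ≤ n) {p : ℕ × ℕ} (hp : p ∈ Pset n) :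
    p = if pa n p = n - 1 then (pb n p, pj p) else (pj p, pm p) := by
  obtain ⟨u, v⟩ := p
  rw [mem_Pset] at hp
  obtain ⟨hne, h1, h2, h3, h4⟩ := hp
  simp only at h1 h2 h3 h4
  unfold pa pb pj pm
  by_cases huv : u ≤ v
  · simp only [huv, if_true]
    rw [if_neg (by omega)]
  · simp only [huv, if_false, if_pos rfl]
    simp
set_option maxHeartbeats 1600000 in
theorem stmt15 (n : ℕ) (hn : 3 ≤ n) :
    (Finset.univ.filter (fun σ : Equiv.Perm (Fin n) =>
        (∀ i, σ i ≠ i) ∧ (rlmIdx σ).card = n - 2)).card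
    = (n - 3) + (n - 2) ^ 2 := by
  classical
  have hn0 : 0 < n := by omega
  have hbij : (Pset n).card = (Finset.univ.filter (fun σ : Equiv.Perm (Fin n) =>
      (∀ i, σ i ≠ i) ∧ (rlmIdx σ).card = n - 2)).card := by
    apply Finset.card_bij (fun p hp => gp (valid_of_mem hn hp))
    · intro p hp
      rw [mem_filter]
      exact ⟨mem_univ _, gp_mem (valid_of_mem hn hp)⟩
    · -- injectivity
      intro p hp q hq heq
      have hP := valid_of_mem hn hp
      have hQ := valid_of_mem hn hq
      have ea : pa n p = pa n q := by
        have h := congrArg (fun σ : Equiv.Perm (Fin n) => (σ ⟨0, hn0⟩).val) heq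
        simp only [gp_val, Fin.val_mk] at h
        unfold gfun at h
        simpa using h
      have hPb := hP; have hQb := hQ
      obtain ⟨-, hj1, hjle, hjm, hmn, hab⟩ := hPb
      obtain ⟨-, hj1', hjle', hjm', hmn', hab'⟩ := hQb
      have hrl : univ.filter (fun i : Fin n => i.val ≠ 0 ∧ i.val ≠ pj p)
          = univ.filter (fun i : Fin n => i.val ≠ 0 ∧ i.val ≠ pj q) := by
        rw [← rlm_gp hP, ← rlm_gp hQ, heq]
      have ej : pj p = pj q := by
        by_contra hne
        have h1 : (⟨pj p, by omega⟩ : Fin n) ∉ univ.filter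
            (fun i : Fin n => i.val ≠ 0 ∧ i.val ≠ pj p) := by
          simp only [mem_filter, Fin.val_mk, mem_univ, true_and]
          tauto
        have h2 : (⟨pj p, by omega⟩ : Fin n) ∈ univ.filter
            (fun i : Fin n => i.val ≠ 0 ∧ i.val ≠ pj q) := by
          simp only [mem_filter, Fin.val_mk, mem_univ, true_and]
          exact ⟨by omega, hne⟩
        rw [← hrl] at h2
        exact h1 h2
      have eb : pb n p = pb n q := by
        have hgf1 : gfun (pa n p) (pb n p) (pj p) (pm p) (pj p) = pb n p := by
          unfold gfun; rw [if_neg (by omega), if_pos rfl]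
        have hgf2 : gfun (pa n q) (pb n q) (pj q) (pm q) (pj p) = pb n q := by
          unfold gfun; rw [if_neg (by omega), if_pos ej]
        have h := congrArg (fun σ : Equiv.Perm (Fin n) =>
          (σ ⟨pj p, by omega⟩).val) heq
        simp only [gp_val, Fin.val_mk] at h
        rw [hgf1, hgf2] at h
        exact h
      have em : pm p = pm q := by
        rcases hab with ⟨ha, hb, hc⟩ | ⟨ha, hb, hc⟩ <;>
          rcases hab' with ⟨ha', hb', hc'⟩ | ⟨ha', hb', hc'⟩ <;> omega
      rw [pset_recover hn hp, pset_recover hn hq, ea, eb, ej, em]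
    · -- surjectivity
      intro σ hσ
      rw [mem_filter] at hσ
      obtain ⟨-, hd, hc⟩ := hσ
      obtain ⟨a, b, j, m, hv, hσeq⟩ := structure_thm hn σ hd hc
      have hvc := hv
      obtain ⟨-, hj1, hjle, hjm, hmn, hab⟩ := hvc
      rcases hab with ⟨ha, hb, hc2⟩ | ⟨ha, hb, hc2⟩
      · -- family A : p = (j, m)
        have hp : (j, m) ∈ Pset n := by
          rw [mem_Pset]
          refine ⟨?_, by omega, by omega, by omega, by omega⟩
          intro he
          have : j = 1 ∧ m = 1 := ⟨congrArg Prod.fst he, congrArg Prod.snd he⟩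
          omega
        refine ⟨(j, m), hp, ?_⟩
        rw [hσeq]
        apply gp_congr
        · unfold pa; rw [if_pos (by simpa using hjm)]; omega
        · unfold pb; rw [if_pos (by simpa using hjm)]; omega
        · unfold pj; rw [if_pos (by simpa using hjm)]
        · unfold pm; rw [if_pos (by simpa using hjm)]
      · -- family B : p = (m-1, j)
        have hp : (m-1, j) ∈ Pset n := by
          rw [mem_Pset]
          refine ⟨?_, by omega, by omega, by omega, by omega⟩
          intro he
          have : m - 1 = 1 ∧ j = 1 := ⟨congrArg Prod.fst he, congrArg Prod.snd he⟩
          omega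
        have hnle : ¬ ((m-1, j).1 ≤ (m-1, j).2) := by simp only; omega
        refine ⟨(m-1, j), hp, ?_⟩
        rw [hσeq]
        apply gp_congr
        · unfold pa; rw [if_neg hnle]; omega
        · unfold pb; rw [if_neg hnle]; omega
        · unfold pj; rw [if_neg hnle]
        · unfold pm; rw [if_neg hnle]; omega
  rw [← hbij, pset_card hn]
  obtain ⟨k, rfl⟩ : ∃ k, n = k + 3 := ⟨n - 3, by omega⟩
  have e1 : k + 3 - 2 = k + 1 := by omega
  have e2 : k + 3 - 1 = k + 2 := by omega
  have e3 : k + 3 - 3 = k := by omega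
  rw [e1, e2, e3]
  have : (k+1) * (k+2) = k + (k+1)^2 + 1 := by ring
  omega
end

section
/- For n ≥ 2, the only derangement σ of [n] with exactly n-1 right-to-left minima is σ = n 1 2 ⋯ (n-1), i.e., σ(1) = n and σ(i) = i-1 for 2 ≤ i ≤ n. -/
open Finset

/-- With `Fin n` representing `[n]` 0-based, the permutation
`n 1 2 ⋯ (n-1)` sends index 0 to n-1 and index i > 0 to i-1. -/
theorem stmt16 (n : ℕ) (hn : 2 ≤ n) (σ : Equiv.Perm (Fin n))
    (hσ : ∀ i, σ i ≠ i) :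
    (rlmIdx σ).card = n - 1 ↔
      ∀ i : Fin n, (σ i).val = if i.val = 0 then n - 1 else i.val - 1 := by
  haveI : NeZero n := ⟨by omega⟩
  constructor
  · intro hcard
    have h0 : (0 : Fin n) ∉ rlmIdx σ := by
      intro h
      simp only [rlmIdx, Finset.mem_filter, Finset.mem_univ, true_and] at h
      apply hσ 0
      by_contra hne
      have hpos : (0 : Fin n) < σ.symm 0 := by
        have hne' : (σ.symm 0).val ≠ 0 := by
          intro he
          apply hne
          have h2 : σ.symm 0 = 0 := Fin.ext (by simp [he])
          simpa using congrArg σ h2.symm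
        rw [Fin.lt_def]
        simp only [Fin.val_zero]
        omega
      have := h _ hpos
      simp only [Equiv.apply_symm_apply] at this
      exact absurd this (by simp [Fin.not_lt, Fin.zero_le])
    have heq : rlmIdx σ = Finset.univ.erase 0 := by
      apply Finset.eq_of_subset_of_card_le
      · intro i hi
        exact Finset.mem_erase.2 ⟨fun h => h0 (h ▸ hi), Finset.mem_univ i⟩
      · rw [Finset.card_erase_of_mem (Finset.mem_univ _), Finset.card_univ,
          Fintype.card_fin, hcard]
    have hmono : ∀ i k : Fin n, i ≠ 0 → i < k → σ i < σ k := by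
      intro i k hi hik
      have hmem : i ∈ rlmIdx σ := heq ▸ Finset.mem_erase.2 ⟨hi, Finset.mem_univ i⟩
      simp only [rlmIdx, Finset.mem_filter] at hmem
      exact hmem.2 k hik
    have hchain : ∀ d : ℕ, ∀ i : Fin n, i ≠ 0 → ∀ hd : i.val + d < n,
        (σ i).val + d ≤ (σ ⟨i.val + d, hd⟩).val := by
      intro d
      induction d with
      | zero => intro i hi hd; simp
      | succ d ih =>
        intro i hi hd
        have hd' : i.val + d < n := by omega
        have h1 := ih i hi hd'
        have hipos : 0 < i.val := Nat.pos_of_ne_zero (fun h => hi (Fin.ext (by simp [h])))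
        have h2 : σ ⟨i.val + d, hd'⟩ < σ ⟨i.val + (d + 1), hd⟩ := by
          apply hmono
          · intro h
            have := congrArg Fin.val h
            simp [Fin.val_zero] at this
            omega
          · simp [Fin.lt_def]
        have h2' : (σ ⟨i.val + d, hd'⟩).val < (σ ⟨i.val + (d + 1), hd⟩).val := h2
        omega
    have hne0 : ∀ i : Fin n, i ≠ 0 → (σ i).val = i.val - 1 := by
      intro i hi
      have hipos : 0 < i.val := Nat.pos_of_ne_zero (fun h => hi (Fin.ext (by simp [h])))
      -- upper bound
      have hup : (σ i).val ≤ i.val := by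
        have hd : i.val + (n - 1 - i.val) < n := by omega
        have := hchain (n - 1 - i.val) i hi hd
        have hle : (σ ⟨i.val + (n - 1 - i.val), hd⟩).val ≤ n - 1 := by
          have := (σ ⟨i.val + (n - 1 - i.val), hd⟩).isLt; omega
        omega
      have hne : (σ i).val ≠ i.val := fun h => hσ i (Fin.ext h)
      -- lower bound
      have h1lt : (1 : ℕ) < n := by omega
      have hone : (⟨1, h1lt⟩ : Fin n) ≠ 0 := by
        intro h; have := congrArg Fin.val h; simp at this
      have hd : (1 : ℕ) + (i.val - 1) < n := by have := i.isLt; omega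
      have hlow := hchain (i.val - 1) ⟨1, h1lt⟩ hone hd
      have hieq : (⟨(1 : ℕ) + (i.val - 1), hd⟩ : Fin n) = i := by
        apply Fin.ext; simp; omega
      rw [hieq] at hlow
      omega
    intro i
    rcases eq_or_ne i 0 with rfl | hi
    · rw [if_pos (show ((0:Fin n)).val = 0 by simp)]
      by_contra hne
      have hlt : (σ 0).val < n - 1 := by
        have := (σ 0).isLt; omega
      set v := (σ 0).val with hv
      have hvd : v + 1 < n := by omega
      have hne0' : (⟨v + 1, hvd⟩ : Fin n) ≠ 0 := by
        intro h; have := congrArg Fin.val h; simp at this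
      have := hne0 ⟨v + 1, hvd⟩ hne0'
      simp only at this
      have heqv : σ ⟨v + 1, hvd⟩ = σ 0 := by
        apply Fin.ext; omega
      have := σ.injective heqv
      have := congrArg Fin.val this
      simp at this
    · have h' : i.val ≠ 0 := fun h => hi (Fin.ext (by simp [h]))
      simp only [if_neg h']
      exact hne0 i hi
  · intro hf
    have h1lt : (1 : ℕ) < n := by omega
    have heq : rlmIdx σ = Finset.univ.erase 0 := by
      ext i
      simp only [rlmIdx, Finset.mem_filter, Finset.mem_univ, true_and,
        Finset.mem_erase, and_true]
      constructor
      · intro h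
        intro h0
        subst h0
        have hlt : (0 : Fin n) < ⟨1, h1lt⟩ := by simp [Fin.lt_def]
        have := h _ hlt
        have hv0 := hf 0
        have hv1 := hf ⟨1, h1lt⟩
        rw [if_pos (show ((0:Fin n)).val = 0 by simp)] at hv0
        simp only [if_neg (by norm_num : (1:ℕ) ≠ 0)] at hv1
        have : (σ 0).val < (σ ⟨1, h1lt⟩).val := this
        omega
      · intro hi k hk
        have hipos : 0 < i.val := Nat.pos_of_ne_zero (fun h => hi (Fin.ext (by simp [h])))
        have hkpos : 0 < k.val := by
          have : i.val < k.val := hk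
          omega
        have hvi := hf i
        have hvk := hf k
        rw [if_neg (by omega)] at hvi
        rw [if_neg (by omega)] at hvk
        have : i.val < k.val := hk
        show (σ i).val < (σ k).val
        omega
    rw [heq, Finset.card_erase_of_mem (Finset.mem_univ _), Finset.card_univ,
      Fintype.card_fin]
end
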